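/- arXiv:2508.17301 — 5 statements merged into one kernel-verified Lean document; each statement's English description precedes it below -/
import Mathlib

section
/- Fix τ ∈ [0,1]. (i) There exists η ∈ [0, 2 − 2δλ₁) such that Π(𝕡(η)) = τ·Π(p^ur) and 𝕡(η) maximizes consumer surplus over the constraint set: for every p ∈ ℝⁿ with Π(p) ≥ τ·Π(p^ur) one has V(p) ≤ V(𝕡(η)). (ii) If τ ∈ (0,1], there exists η ≤ 0 such that Π(𝕡(η)) = τ·Π(p^ur) and 𝕡(η) minimizes consumer surplus over the same constraint set: for every p with Π(p) ≥ τ·Π(p^ur) one has V(p) ≥ V(𝕡(η)). -/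
open Matrix

noncomputable def Hmat {n : ℕ} (G : Matrix (Fin n) (Fin n) ℝ) (δ : ℝ) :
    Matrix (Fin n) (Fin n) ℝ :=
  (1 - δ • G)⁻¹

/-- Monopolist profit Π(p) = (p − c)ᵀ H (a − p). -/
noncomputable def profit {n : ℕ} (G : Matrix (Fin n) (Fin n) ℝ) (δ : ℝ)
    (a c p : Fin n → ℝ) : ℝ :=
  (p - c) ⬝ᵥ (Hmat G δ *ᵥ (a - p))

/-- Aggregate consumer surplus V(p) = (1/2)(a − p)ᵀ H² (a − p). -/
noncomputable def surplus {n : ℕ} (G : Matrix (Fin n) (Fin n) ℝ) (δ : ℝ)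
    (a p : Fin n → ℝ) : ℝ :=
  (1 / 2 : ℝ) * ((a - p) ⬝ᵥ ((Hmat G δ * Hmat G δ) *ᵥ (a - p)))

/-- Unrestricted optimal price p^ur = (a + c)/2. -/
noncomputable def pUR {n : ℕ} (a c : Fin n → ℝ) : Fin n → ℝ :=
  (1 / 2 : ℝ) • (a + c)

/-- The Pareto price family 𝕡(η). -/
noncomputable def pFam {n : ℕ} (G : Matrix (Fin n) (Fin n) ℝ) (δ : ℝ)
    (a c : Fin n → ℝ) (η : ℝ) : Fin n → ℝ :=
  pUR a c - (η / (2 - η)) • ((1 - (2 * δ / (2 - η)) • G)⁻¹ *ᵥ ((1 / 2 : ℝ) • (a - c)))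

/-!
In the quantities `y = H (a - p)`, with `b = a - c`, profit becomes
`Π(y) = b ⬝ᵥ y - y ⬝ᵥ (1 - δ G) y` and consumer surplus `(1/2) y ⬝ᵥ y`, while
`H (a - 𝕡(η)) = K(η)⁻¹ b` for `K(η) = (2 - η) 1 - 2 δ G`, which is positive definite for
`η < 2 - 2 δ λ₁`. Completing the square around `y₀ = K(η)⁻¹ b` gives
`2 Π(y) + η |y|² = y₀ ⬝ᵥ K y₀ - (y - y₀) ⬝ᵥ K (y - y₀)`, so every `y` earning at least `Π(y₀)`
has `η |y|² ≤ η |y₀|²`: the price `𝕡(η)` maximizes surplus when `η ≥ 0` and minimizes it when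
`η ≤ 0`. The profit level `τ Π(p^ur)` is then reached by the intermediate value theorem:
`η ↦ Π(K(η)⁻¹ b)` is continuous, equals `Π(p^ur)` at `0`, tends to `0` as `η → -∞`, and becomes
nonpositive near `2 - 2 δ λ₁` because `b > 0` pairs positively with a nonnegative Perron
eigenvector of `G`.
-/

theorem Matrix.IsSymm.dotProduct_mulVec_comm {ι R : Type*} [Fintype ι] [CommSemiring R]
    {K : Matrix ι ι R} (hK : K.IsSymm) (u v : ι → R) : u ⬝ᵥ (K *ᵥ v) = v ⬝ᵥ (K *ᵥ u) := by
  rw [dotProduct_mulVec, ← mulVec_transpose, hK.eq, dotProduct_comm]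

section Quadratic

variable {ι : Type*} [Fintype ι]

theorem dotProduct_self_nonneg (x : ι → ℝ) : 0 ≤ x ⬝ᵥ x := by
  simpa using dotProduct_self_star_nonneg x

theorem dotProduct_sq_le_mul (x y : ι → ℝ) : (x ⬝ᵥ y) ^ 2 ≤ (x ⬝ᵥ x) * (y ⬝ᵥ y) := by
  simpa [dotProduct, pow_two] using Finset.sum_mul_sq_le_sq_mul_sq Finset.univ x y

theorem dotProduct_le_of_dotProduct_self_le {b y : ι → ℝ} {η : ℝ} (hη : 0 ≤ η)
    (h : b ⬝ᵥ b ≤ η ^ 2 * (y ⬝ᵥ y)) : b ⬝ᵥ y ≤ η * (y ⬝ᵥ y) := by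
  have hy := dotProduct_self_nonneg y
  refine le_of_sq_le_sq ?_ (by positivity)
  calc (b ⬝ᵥ y) ^ 2 ≤ (b ⬝ᵥ b) * (y ⬝ᵥ y) := dotProduct_sq_le_mul b y
    _ ≤ η ^ 2 * (y ⬝ᵥ y) * (y ⬝ᵥ y) := by gcongr
    _ = (η * (y ⬝ᵥ y)) ^ 2 := by ring

theorem two_mul_dotProduct_sub_dotProduct_mulVec {K : Matrix ι ι ℝ} (hK : K.IsSymm)
    {y₀ b : ι → ℝ} (hb : K *ᵥ y₀ = b) (y : ι → ℝ) :
    2 * (b ⬝ᵥ y) - y ⬝ᵥ (K *ᵥ y) = y₀ ⬝ᵥ (K *ᵥ y₀) - (y - y₀) ⬝ᵥ (K *ᵥ (y - y₀)) := by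
  subst hb
  have := hK.dotProduct_mulVec_comm y y₀
  simp only [mulVec_sub, dotProduct_sub, sub_dotProduct, dotProduct_comm (K *ᵥ y₀) y] at *
  linarith

theorem sq_dotProduct_le_of_mulVec_eq_smul {K : Matrix ι ι ℝ} (hK : K.IsSymm) {v y b : ι → ℝ}
    {κ : ℝ} (hv : K *ᵥ v = κ • v) (hy : K *ᵥ y = b) :
    (v ⬝ᵥ b) ^ 2 ≤ κ ^ 2 * ((v ⬝ᵥ v) * (y ⬝ᵥ y)) := by
  rw [← hy, hK.dotProduct_mulVec_comm, hv, dotProduct_smul, smul_eq_mul, mul_pow,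
    dotProduct_comm]
  exact mul_le_mul_of_nonneg_left (dotProduct_sq_le_mul v y) (sq_nonneg κ)

theorem dotProduct_pos_of_nonneg_of_pos {v b : ι → ℝ} (hv0 : v ≠ 0) (hv : 0 ≤ v)
    (hb : ∀ i, 0 < b i) : 0 < v ⬝ᵥ b := by
  obtain ⟨j, hj⟩ := Function.ne_iff.1 hv0
  exact Finset.sum_pos' (fun i _ => mul_nonneg (hv i) (hb i).le)
    ⟨j, Finset.mem_univ j, mul_pos ((hv j).lt_of_ne' hj) (hb j)⟩

theorem nonneg_of_nonneg_eigenvector {G : Matrix ι ι ℝ} {lam : ℝ} (hGnn : ∀ i j, 0 ≤ G i j)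
    {v : ι → ℝ} (hv0 : v ≠ 0) (hvnn : 0 ≤ v) (hv : G *ᵥ v = lam • v) : 0 ≤ lam := by
  have hGv : 0 ≤ v ⬝ᵥ (G *ᵥ v) := dotProduct_nonneg_of_nonneg hvnn fun i =>
    Finset.sum_nonneg fun j _ => mul_nonneg (hGnn i j) (hvnn j)
  have hvv : 0 < v ⬝ᵥ v := by simpa using dotProduct_self_star_pos_iff.2 hv0
  rw [hv, dotProduct_smul, smul_eq_mul] at hGv
  exact (mul_nonneg_iff_of_pos_right hvv).1 hGv

end Quadratic

section Spectral

variable {ι : Type*} [DecidableEq ι] {G : Matrix ι ι ℝ} {lam : ℝ}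

theorem posDef_smul_one_sub_smul (hG : (lam • (1 : Matrix ι ι ℝ) - G).PosSemidef) {c δ : ℝ}
    (hδ : 0 ≤ δ) (hc : δ * lam < c) : (c • (1 : Matrix ι ι ℝ) - δ • G).PosDef := by
  have h : c • (1 : Matrix ι ι ℝ) - δ • G
      = (c - δ * lam) • (1 : Matrix ι ι ℝ) + δ • (lam • (1 : Matrix ι ι ℝ) - G) := by
    module
  rw [h]
  exact (PosDef.one.smul (sub_pos.2 hc)).add_posSemidef (hG.smul hδ)

variable [Fintype ι]

theorem dotProduct_smul_one_sub_mulVec (x : ι → ℝ) :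
    x ⬝ᵥ ((lam • (1 : Matrix ι ι ℝ) - G) *ᵥ x) = lam * (x ⬝ᵥ x) - x ⬝ᵥ (G *ᵥ x) := by
  rw [sub_mulVec, smul_mulVec, one_mulVec, dotProduct_sub, dotProduct_smul, smul_eq_mul]

theorem posSemidef_smul_one_sub_of_spectrum_le (hG : G.IsSymm)
    (hmax : ∀ μ ∈ spectrum ℝ G, μ ≤ lam) : (lam • (1 : Matrix ι ι ℝ) - G).PosSemidef := by
  rw [← Algebra.algebraMap_eq_smul_one, posSemidef_iff_isHermitian_and_spectrum_nonneg,
    ← spectrum.singleton_sub_eq, Algebra.algebraMap_eq_smul_one, isHermitian_iff_isSymm]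
  refine ⟨(isSymm_one.smul lam).sub hG, ?_⟩
  rintro _ ⟨_, rfl, μ, hμ, rfl⟩
  exact sub_nonneg.2 (hmax μ hμ)

/-- Taking absolute values in an eigenvector of the top eigenvalue does not lower its Rayleigh
quotient, so the result is again an eigenvector. -/
theorem exists_nonneg_eigenvector_of_spectrum_le (hG : G.IsSymm) (hGnn : ∀ i j, 0 ≤ G i j)
    (hlam : lam ∈ spectrum ℝ G) (hmax : ∀ μ ∈ spectrum ℝ G, μ ≤ lam) :
    ∃ v : ι → ℝ, v ≠ 0 ∧ 0 ≤ v ∧ G *ᵥ v = lam • v := by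
  have hS := posSemidef_smul_one_sub_of_spectrum_le hG hmax
  obtain ⟨w, hw0, hw⟩ : ∃ w ≠ 0, (lam • (1 : Matrix ι ι ℝ) - G) *ᵥ w = 0 := by
    rw [exists_mulVec_eq_zero_iff, ← not_ne_iff, ← isUnit_iff_ne_zero, ← isUnit_iff_isUnit_det,
      ← Algebra.algebraMap_eq_smul_one]
    exact spectrum.mem_iff.1 hlam
  set v : ι → ℝ := fun i => |w i|
  have hvv : v ⬝ᵥ v = w ⬝ᵥ w := by simp [v, dotProduct, abs_mul_abs_self]
  have hGvw : w ⬝ᵥ (G *ᵥ w) ≤ v ⬝ᵥ (G *ᵥ v) := by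
    simp only [dotProduct, mulVec, Finset.mul_sum]
    refine Finset.sum_le_sum fun i _ => Finset.sum_le_sum fun j _ => ?_
    calc w i * (G i j * w j) ≤ |w i * (G i j * w j)| := le_abs_self _
      _ = v i * (G i j * v j) := by rw [abs_mul, abs_mul, abs_of_nonneg (hGnn i j)]
  have hq : v ⬝ᵥ ((lam • (1 : Matrix ι ι ℝ) - G) *ᵥ v) = 0 := by
    have hw' := congrArg (w ⬝ᵥ ·) hw
    have hnn := hS.dotProduct_mulVec_nonneg v
    simp only [dotProduct_zero, dotProduct_smul_one_sub_mulVec, star_trivial] at hw' hnn ⊢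
    rw [hvv] at hnn ⊢
    linarith
  have hker := (hS.dotProduct_mulVec_zero_iff v).1 (by rwa [star_trivial])
  rw [sub_mulVec, smul_mulVec, one_mulVec, sub_eq_zero] at hker
  refine ⟨v, fun h => hw0 ?_, fun i => abs_nonneg (w i), hker.symm⟩
  funext i
  simpa [v] using congrFun h i

end Spectral

section Pareto

variable {ι : Type*} [DecidableEq ι] {G : Matrix ι ι ℝ} {δ η : ℝ} {b : ι → ℝ}

def paretoMatrix (G : Matrix ι ι ℝ) (δ η : ℝ) : Matrix ι ι ℝ :=
  (2 - η) • 1 - (2 * δ) • G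

theorem one_sub_smul_eq_paretoMatrix (G : Matrix ι ι ℝ) (δ η : ℝ) :
    1 - δ • G = (1 / 2 : ℝ) • paretoMatrix G δ η + (η / 2) • 1 := by
  rw [paretoMatrix]
  module

variable [Fintype ι]

def quantityProfit (G : Matrix ι ι ℝ) (δ : ℝ) (b y : ι → ℝ) : ℝ :=
  (b - (1 - δ • G) *ᵥ y) ⬝ᵥ y

noncomputable def paretoQuantity (G : Matrix ι ι ℝ) (δ : ℝ) (b : ι → ℝ) (η : ℝ) : ι → ℝ :=
  (paretoMatrix G δ η)⁻¹ *ᵥ b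

noncomputable def paretoProfit (G : Matrix ι ι ℝ) (δ : ℝ) (b : ι → ℝ) (η : ℝ) : ℝ :=
  quantityProfit G δ b (paretoQuantity G δ b η)

theorem paretoMatrix_posDef {lam : ℝ} (hG : G.IsSymm) (hmax : ∀ μ ∈ spectrum ℝ G, μ ≤ lam)
    (hδ : 0 ≤ δ) (hη : η < 2 - 2 * δ * lam) : (paretoMatrix G δ η).PosDef :=
  posDef_smul_one_sub_smul (posSemidef_smul_one_sub_of_spectrum_le hG hmax) (by positivity)
    (by linarith)

theorem paretoMatrix_mulVec_paretoQuantity (hK : (paretoMatrix G δ η).PosDef) (b : ι → ℝ) :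
    paretoMatrix G δ η *ᵥ paretoQuantity G δ b η = b := by
  rw [paretoQuantity, mulVec_mulVec,
    mul_nonsing_inv _ ((isUnit_iff_isUnit_det _).1 hK.isUnit), one_mulVec]

theorem two_mul_quantityProfit_add (η : ℝ) (b y : ι → ℝ) :
    2 * quantityProfit G δ b y + η * (y ⬝ᵥ y) = 2 * (b ⬝ᵥ y) - y ⬝ᵥ (paretoMatrix G δ η *ᵥ y) := by
  rw [quantityProfit, one_sub_smul_eq_paretoMatrix G δ η]
  simp only [add_mulVec, smul_mulVec, one_mulVec, sub_dotProduct, add_dotProduct,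
    smul_dotProduct, smul_eq_mul, dotProduct_comm (paretoMatrix G δ η *ᵥ y) y]
  ring

theorem two_mul_paretoProfit (hK : (paretoMatrix G δ η).PosDef) (b : ι → ℝ) :
    2 * paretoProfit G δ b η
      = b ⬝ᵥ paretoQuantity G δ b η
        - η * (paretoQuantity G δ b η ⬝ᵥ paretoQuantity G δ b η) := by
  have h := two_mul_quantityProfit_add (G := G) (δ := δ) η b (paretoQuantity G δ b η)
  rw [paretoMatrix_mulVec_paretoQuantity hK, dotProduct_comm _ b] at h
  rw [paretoProfit]
  linarith

theorem mul_dotProduct_self_add_le_of_paretoProfit_le (hK : (paretoMatrix G δ η).PosDef)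
    {y : ι → ℝ} (h : paretoProfit G δ b η ≤ quantityProfit G δ b y) :
    η * (y ⬝ᵥ y) + (y - paretoQuantity G δ b η) ⬝ᵥ
        (paretoMatrix G δ η *ᵥ (y - paretoQuantity G δ b η))
      ≤ η * (paretoQuantity G δ b η ⬝ᵥ paretoQuantity G δ b η) := by
  have hsymm : (paretoMatrix G δ η).IsSymm := isHermitian_iff_isSymm.1 hK.isHermitian
  have hsq := two_mul_dotProduct_sub_dotProduct_mulVec hsymm
    (paretoMatrix_mulVec_paretoQuantity hK b)
  have hy := two_mul_quantityProfit_add (G := G) (δ := δ) η b y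
  have hy₀ := two_mul_quantityProfit_add (G := G) (δ := δ) η b (paretoQuantity G δ b η)
  rw [hsq] at hy
  rw [hsq, sub_self, zero_dotProduct, sub_zero] at hy₀
  rw [paretoProfit] at h
  linarith

theorem eq_paretoQuantity_zero_of_paretoProfit_le (hK : (paretoMatrix G δ 0).PosDef)
    {y : ι → ℝ} (h : paretoProfit G δ b 0 ≤ quantityProfit G δ b y) :
    y = paretoQuantity G δ b 0 := by
  have hq := mul_dotProduct_self_add_le_of_paretoProfit_le hK h
  simp only [zero_mul, zero_add] at hq
  by_contra hne
  have := hK.dotProduct_mulVec_pos (sub_ne_zero.2 hne)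
  rw [star_trivial] at this
  linarith

theorem dotProduct_self_le_of_paretoProfit_le (hK : (paretoMatrix G δ η).PosDef) (hη : 0 ≤ η)
    {y : ι → ℝ} (h : paretoProfit G δ b η ≤ quantityProfit G δ b y) :
    y ⬝ᵥ y ≤ paretoQuantity G δ b η ⬝ᵥ paretoQuantity G δ b η := by
  rcases hη.lt_or_eq with hη | rfl
  · have hq := mul_dotProduct_self_add_le_of_paretoProfit_le hK h
    have := hK.posSemidef.dotProduct_mulVec_nonneg (y - paretoQuantity G δ b η)
    rw [star_trivial] at this
    exact le_of_mul_le_mul_left (by linarith) hη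
  · rw [eq_paretoQuantity_zero_of_paretoProfit_le hK h]

theorem dotProduct_self_le_of_paretoProfit_le_of_nonpos (hK : (paretoMatrix G δ η).PosDef)
    (hη : η ≤ 0) {y : ι → ℝ}
    (h : paretoProfit G δ b η ≤ quantityProfit G δ b y) :
    paretoQuantity G δ b η ⬝ᵥ paretoQuantity G δ b η ≤ y ⬝ᵥ y := by
  rcases hη.lt_or_eq with hη | rfl
  · have hq := mul_dotProduct_self_add_le_of_paretoProfit_le hK h
    have := hK.posSemidef.dotProduct_mulVec_nonneg (y - paretoQuantity G δ b η)
    rw [star_trivial] at this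
    exact (mul_le_mul_left_of_neg hη).1 (by linarith)
  · rw [eq_paretoQuantity_zero_of_paretoProfit_le hK h]

theorem continuousOn_paretoQuantity {lam : ℝ} (hG : G.IsSymm)
    (hmax : ∀ μ ∈ spectrum ℝ G, μ ≤ lam) (hδ : 0 ≤ δ) (b : ι → ℝ) :
    ContinuousOn (paretoQuantity G δ b) (Set.Iio (2 - 2 * δ * lam)) := by
  intro η hη
  have hK : Continuous (paretoMatrix G δ) := by unfold paretoMatrix; fun_prop
  have hinv : ContinuousAt Inv.inv (paretoMatrix G δ η) := by
    refine continuousAt_matrix_inv _ ?_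
    rw [Ring.inverse_eq_inv']
    exact continuousAt_inv₀ (paretoMatrix_posDef hG hmax hδ hη).det_pos.ne'
  exact ((continuous_id.matrix_mulVec continuous_const).continuousAt.comp
    (f := Inv.inv ∘ paretoMatrix G δ) (hinv.comp hK.continuousAt)).continuousWithinAt

theorem continuousOn_paretoProfit {lam : ℝ} (hG : G.IsSymm)
    (hmax : ∀ μ ∈ spectrum ℝ G, μ ≤ lam) (hδ : 0 ≤ δ) (b : ι → ℝ) :
    ContinuousOn (paretoProfit G δ b) (Set.Iio (2 - 2 * δ * lam)) := by
  have : Continuous (quantityProfit G δ b) := by unfold quantityProfit; fun_prop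
  exact this.comp_continuousOn (continuousOn_paretoQuantity hG hmax hδ b)

theorem paretoProfit_zero_pos (hK₀ : (paretoMatrix G δ 0).PosDef) (hb : b ≠ 0) :
    0 < paretoProfit G δ b 0 := by
  have hy := paretoMatrix_mulVec_paretoQuantity hK₀ b
  have hy₀ : paretoQuantity G δ b 0 ≠ 0 := by
    rintro h
    rw [h, mulVec_zero] at hy
    exact hb hy.symm
  have hpos := hK₀.dotProduct_mulVec_pos hy₀
  have h2 := two_mul_paretoProfit hK₀ b
  rw [star_trivial, hy, dotProduct_comm] at hpos
  linarith

/-- The eigenvector `v` of `G` is one of `paretoMatrix G δ η` with eigenvalue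
`2 - 2 δ λ - η`, which tends to `0`; pairing with `v` then forces `paretoQuantity` to blow up. -/
theorem exists_paretoProfit_nonpos {lam : ℝ} (hG : G.IsSymm)
    (hmax : ∀ μ ∈ spectrum ℝ G, μ ≤ lam) (hδ : 0 ≤ δ) (hA : 0 < 1 - δ * lam) {v : ι → ℝ}
    (hv : G *ᵥ v = lam • v) (hvb : 0 < v ⬝ᵥ b) :
    ∃ η, 0 < η ∧ η < 2 - 2 * δ * lam ∧ paretoProfit G δ b η ≤ 0 := by
  have hvvbb : 0 < (v ⬝ᵥ v) * (b ⬝ᵥ b) := (pow_pos hvb 2).trans_le (dotProduct_sq_le_mul v b)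
  have hvv : 0 < v ⬝ᵥ v :=
    lt_of_le_of_ne (dotProduct_self_nonneg v) fun h => by rw [← h, zero_mul] at hvvbb; linarith
  set s := (v ⬝ᵥ b) ^ 2 / ((v ⬝ᵥ v) * (b ⬝ᵥ b))
  have hs0 : 0 < s := by positivity
  have hs1 : s ≤ 1 := div_le_one_of_le₀ (dotProduct_sq_le_mul v b) hvvbb.le
  have hvb2 : (v ⬝ᵥ b) ^ 2 = s * ((v ⬝ᵥ v) * (b ⬝ᵥ b)) := by
    rw [div_mul_cancel₀ _ hvvbb.ne']
  set c := 1 - δ * lam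
  set η := (2 - s) * c
  have hη : η < 2 - 2 * δ * lam := by nlinarith
  refine ⟨η, by nlinarith, hη, ?_⟩
  have hK := paretoMatrix_posDef hG hmax hδ hη
  set y := paretoQuantity G δ b η
  have hKv : paretoMatrix G δ η *ᵥ v = (s * c) • v := by
    rw [paretoMatrix, sub_mulVec, smul_mulVec, smul_mulVec, one_mulVec, hv, smul_smul, ← sub_smul]
    congr 1
    ring
  have hbb : b ⬝ᵥ b ≤ η ^ 2 * (y ⬝ᵥ y) := by
    have h1 : s * (v ⬝ᵥ v) * (b ⬝ᵥ b) ≤ s * (v ⬝ᵥ v) * (s * c ^ 2 * (y ⬝ᵥ y)) := by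
      have := sq_dotProduct_le_of_mulVec_eq_smul (isHermitian_iff_isSymm.1 hK.isHermitian) hKv
        (paretoMatrix_mulVec_paretoQuantity hK b)
      linear_combination this - hvb2
    have := dotProduct_self_nonneg y
    calc b ⬝ᵥ b ≤ s * c ^ 2 * (y ⬝ᵥ y) := le_of_mul_le_mul_left h1 (by positivity)
      _ ≤ η ^ 2 * (y ⬝ᵥ y) := by
        gcongr
        show s * c ^ 2 ≤ ((2 - s) * c) ^ 2
        nlinarith [mul_nonneg (sub_nonneg.2 hs1) (sq_nonneg c)]
  have h2 := two_mul_paretoProfit hK b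
  have h3 := dotProduct_le_of_dotProduct_self_le (mul_pos (by linarith) hA).le hbb
  linarith

/-- As `η → -∞`, `paretoQuantity` shrinks like `b / |η|`, and so does its profit. -/
theorem exists_neg_paretoProfit_le (hK₀ : (paretoMatrix G δ 0).PosDef)
    {ε : ℝ} (hε : 0 < ε) (b : ι → ℝ) :
    ∃ η < 0, paretoProfit G δ b η ≤ ε := by
  have hbb := dotProduct_self_nonneg b
  set t := (b ⬝ᵥ b + 1) / ε
  have ht : 0 < t := by positivity
  have hKt : paretoMatrix G δ (-t) = paretoMatrix G δ 0 + t • 1 := by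
    unfold paretoMatrix
    module
  have hK : (paretoMatrix G δ (-t)).PosDef := hKt ▸ hK₀.add (PosDef.one.smul ht)
  refine ⟨-t, by linarith, ?_⟩
  set y := paretoQuantity G δ b (-t)
  have hby : t * (y ⬝ᵥ y) ≤ b ⬝ᵥ y := by
    have := hK₀.posSemidef.dotProduct_mulVec_nonneg y
    rw [← paretoMatrix_mulVec_paretoQuantity hK b, hKt, add_mulVec, smul_mulVec, one_mulVec,
      add_dotProduct, smul_dotProduct, smul_eq_mul, dotProduct_comm (_ *ᵥ y)]
    rw [star_trivial] at this
    linarith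
  have hty : t * (b ⬝ᵥ y) ≤ b ⬝ᵥ b := by
    rcases le_or_gt (b ⬝ᵥ y) 0 with h | h
    · nlinarith
    · refine le_of_mul_le_mul_right ?_ h
      nlinarith [dotProduct_sq_le_mul b y]
  have h2 := two_mul_paretoProfit hK b
  have htε : t * ε = b ⬝ᵥ b + 1 := div_mul_cancel₀ _ hε.ne'
  refine le_of_mul_le_mul_left ?_ ht
  nlinarith

end Pareto

section Model

variable {n : ℕ} {G : Matrix (Fin n) (Fin n) ℝ} {δ η : ℝ}

theorem one_sub_smul_mul_Hmat (hA : (1 - δ • G).PosDef) : (1 - δ • G) * Hmat G δ = 1 :=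
  mul_nonsing_inv _ ((isUnit_iff_isUnit_det _).1 hA.isUnit)

theorem Hmat_mul_one_sub_smul (hA : (1 - δ • G).PosDef) : Hmat G δ * (1 - δ • G) = 1 :=
  nonsing_inv_mul _ ((isUnit_iff_isUnit_det _).1 hA.isUnit)

theorem profit_eq_quantityProfit (hA : (1 - δ • G).PosDef) (a c p : Fin n → ℝ) :
    profit G δ a c p = quantityProfit G δ (a - c) (Hmat G δ *ᵥ (a - p)) := by
  rw [profit, quantityProfit, mulVec_mulVec, one_sub_smul_mul_Hmat hA, one_mulVec,
    sub_sub_sub_cancel_left]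

theorem surplus_eq_half_dotProduct_self (hA : (1 - δ • G).PosDef) (a p : Fin n → ℝ) :
    surplus G δ a p = 1 / 2 * ((Hmat G δ *ᵥ (a - p)) ⬝ᵥ (Hmat G δ *ᵥ (a - p))) := by
  have hH : (Hmat G δ)ᵀ = Hmat G δ := by
    rw [Hmat, transpose_nonsing_inv, (isHermitian_iff_isSymm.1 hA.isHermitian).eq]
  rw [surplus, ← mulVec_mulVec, dotProduct_mulVec, ← mulVec_transpose, hH]

theorem pFam_zero (G : Matrix (Fin n) (Fin n) ℝ) (δ : ℝ) (a c : Fin n → ℝ) :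
    pFam G δ a c 0 = pUR a c := by
  simp [pFam]

theorem Hmat_mulVec_sub_pFam (hA : (1 - δ • G).PosDef) (hK : (paretoMatrix G δ η).PosDef)
    (hη : η ≠ 2) (a c : Fin n → ℝ) :
    Hmat G δ *ᵥ (a - pFam G δ a c η) = paretoQuantity G δ (a - c) η := by
  have h2η : 2 - η ≠ 0 := sub_ne_zero.2 hη.symm
  have hN : 1 - (2 * δ / (2 - η)) • G = (2 - η)⁻¹ • paretoMatrix G δ η := by
    rw [paretoMatrix, smul_sub, smul_smul, smul_smul, inv_mul_cancel₀ h2η, one_smul,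
      inv_mul_eq_div]
  have hNinv : (1 - (2 * δ / (2 - η)) • G)⁻¹ = (2 - η) • (paretoMatrix G δ η)⁻¹ := by
    have := invertibleOfNonzero (inv_ne_zero h2η)
    rw [hN, Matrix.inv_smul (k := (2 - η)⁻¹) (h := (isUnit_iff_isUnit_det _).1 hK.isUnit),
      invOf_eq_inv, inv_inv]
  have hsub : a - pFam G δ a c η = (1 - δ • G) *ᵥ paretoQuantity G δ (a - c) η := by
    rw [one_sub_smul_eq_paretoMatrix G δ η, add_mulVec, smul_mulVec, smul_mulVec, one_mulVec,
      paretoMatrix_mulVec_paretoQuantity hK, pFam, hNinv, smul_mulVec, mulVec_smul, pUR,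
      ← paretoQuantity]
    funext i
    simp only [Pi.sub_apply, Pi.add_apply, Pi.smul_apply, smul_eq_mul]
    field_simp
    ring
  rw [hsub, mulVec_mulVec, Hmat_mul_one_sub_smul hA, one_mulVec]

theorem profit_pFam (hA : (1 - δ • G).PosDef) (hK : (paretoMatrix G δ η).PosDef) (hη : η ≠ 2)
    (a c : Fin n → ℝ) : profit G δ a c (pFam G δ a c η) = paretoProfit G δ (a - c) η := by
  rw [profit_eq_quantityProfit hA, Hmat_mulVec_sub_pFam hA hK hη, paretoProfit]

theorem profit_pUR (hA : (1 - δ • G).PosDef) (hK : (paretoMatrix G δ 0).PosDef)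
    (a c : Fin n → ℝ) : profit G δ a c (pUR a c) = paretoProfit G δ (a - c) 0 := by
  rw [← pFam_zero G δ, profit_pFam hA hK two_ne_zero.symm]

theorem surplus_le_surplus_pFam_of_profit_le (hA : (1 - δ • G).PosDef)
    (hK : (paretoMatrix G δ η).PosDef) (hη2 : η ≠ 2) (hη : 0 ≤ η) {a c p : Fin n → ℝ}
    (h : profit G δ a c (pFam G δ a c η) ≤ profit G δ a c p) :
    surplus G δ a p ≤ surplus G δ a (pFam G δ a c η) := by
  rw [profit_pFam hA hK hη2, profit_eq_quantityProfit hA] at h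
  rw [surplus_eq_half_dotProduct_self hA, surplus_eq_half_dotProduct_self hA,
    Hmat_mulVec_sub_pFam hA hK hη2]
  linarith [dotProduct_self_le_of_paretoProfit_le hK hη h]

theorem surplus_pFam_le_surplus_of_profit_le (hA : (1 - δ • G).PosDef)
    (hK : (paretoMatrix G δ η).PosDef) (hη : η ≤ 0) {a c p : Fin n → ℝ}
    (h : profit G δ a c (pFam G δ a c η) ≤ profit G δ a c p) :
    surplus G δ a (pFam G δ a c η) ≤ surplus G δ a p := by
  have hη2 : η ≠ 2 := by linarith
  rw [profit_pFam hA hK hη2, profit_eq_quantityProfit hA] at h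
  rw [surplus_eq_half_dotProduct_self hA, surplus_eq_half_dotProduct_self hA,
    Hmat_mulVec_sub_pFam hA hK hη2]
  linarith [dotProduct_self_le_of_paretoProfit_le_of_nonpos hK hη h]

end Model

theorem stmt0_general {n : ℕ}
    (G : Matrix (Fin n) (Fin n) ℝ) (hGsym : G.IsSymm)
    (hGnn : ∀ i j, 0 ≤ G i j)
    (δ : ℝ) (hδ : 0 ≤ δ)
    (lam1 : ℝ) (hlam1 : lam1 ∈ spectrum ℝ G)
    (hlam1max : ∀ μ ∈ spectrum ℝ G, μ ≤ lam1)
    (hA1 : 0 < 1 - δ * lam1)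
    (a c : Fin n → ℝ) (hac : ∀ i, c i < a i)
    (τ : ℝ) (hτ : τ ∈ Set.Icc (0 : ℝ) 1) :
    (∃ η ∈ Set.Ico (0 : ℝ) (2 - 2 * δ * lam1),
      profit G δ a c (pFam G δ a c η) = τ * profit G δ a c (pUR a c) ∧
      ∀ p : Fin n → ℝ, τ * profit G δ a c (pUR a c) ≤ profit G δ a c p →
        surplus G δ a p ≤ surplus G δ a (pFam G δ a c η)) ∧
    (τ ∈ Set.Ioc (0 : ℝ) 1 →
      ∃ η ≤ (0 : ℝ),
        profit G δ a c (pFam G δ a c η) = τ * profit G δ a c (pUR a c) ∧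
        ∀ p : Fin n → ℝ, τ * profit G δ a c (pUR a c) ≤ profit G δ a c p →
          surplus G δ a (pFam G δ a c η) ≤ surplus G δ a p) := by
  obtain ⟨v, hv0, hvnn, hv⟩ := exists_nonneg_eigenvector_of_spectrum_le hGsym hGnn hlam1 hlam1max
  have hlam1nn := nonneg_of_nonneg_eigenvector hGnn hv0 hvnn hv
  have hvb := dotProduct_pos_of_nonneg_of_pos (b := a - c) hv0 hvnn fun i => sub_pos.2 (hac i)
  have hA : (1 - δ • G).PosDef := by
    simpa using posDef_smul_one_sub_smul (c := 1)
      (posSemidef_smul_one_sub_of_spectrum_le hGsym hlam1max) hδ (by linarith)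
  have hK : ∀ η < 2 - 2 * δ * lam1, (paretoMatrix G δ η).PosDef :=
    fun η hη => paretoMatrix_posDef hGsym hlam1max hδ hη
  set φ := paretoProfit G δ (a - c)
  have hUR : profit G δ a c (pUR a c) = φ 0 := profit_pUR hA (hK 0 (by linarith)) a c
  have hφ0 : 0 < φ 0 := paretoProfit_zero_pos (hK 0 (by linarith))
    fun h => by rw [h, dotProduct_zero] at hvb; exact hvb.false
  have hφ := continuousOn_paretoProfit hGsym hlam1max hδ (a - c)
  refine ⟨?_, fun hτ' => ?_⟩
  · obtain ⟨η₁, hη₁0, hη₁, hφη₁⟩ := exists_paretoProfit_nonpos hGsym hlam1max hδ hA1 hv hvb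
    obtain ⟨η, hη, hφη⟩ := intermediate_value_Icc' hη₁0.le
      (hφ.mono fun x hx => hx.2.trans_lt hη₁)
      (show τ * φ 0 ∈ Set.Icc (φ η₁) (φ 0) from ⟨by nlinarith [hτ.1], by nlinarith [hτ.2]⟩)
    have hηlt := hη.2.trans_lt hη₁
    have hprofit := profit_pFam hA (hK η hηlt) (by nlinarith) a c
    refine ⟨η, ⟨hη.1, hηlt⟩, by rw [hprofit, hφη, hUR], fun p hp => ?_⟩
    exact surplus_le_surplus_pFam_of_profit_le hA (hK η hηlt) (by nlinarith) hη.1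
      (by rwa [hprofit, hφη, ← hUR])
  · obtain ⟨η₁, hη₁0, hφη₁⟩ :=
      exists_neg_paretoProfit_le (hK 0 (by linarith)) (mul_pos hτ'.1 hφ0) (a - c)
    obtain ⟨η, hη, hφη⟩ := intermediate_value_Icc hη₁0.le
      (hφ.mono fun x hx => hx.2.trans_lt (by linarith))
      (show τ * φ 0 ∈ Set.Icc (φ η₁) (φ 0) from ⟨hφη₁, by nlinarith [hτ.2]⟩)
    have hηlt : η < 2 - 2 * δ * lam1 := by linarith [hη.2]
    have hprofit := profit_pFam hA (hK η hηlt) (by linarith [hη.2]) a c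
    refine ⟨η, hη.2, by rw [hprofit, hφη, hUR], fun p hp => ?_⟩
    exact surplus_pFam_le_surplus_of_profit_le hA (hK η hηlt) hη.2 (by rwa [hprofit, hφη, ← hUR])

theorem stmt0 {n : ℕ} (hn : 1 ≤ n)
    (G : Matrix (Fin n) (Fin n) ℝ) (hGsym : G.IsSymm)
    (hGnn : ∀ i j, 0 ≤ G i j) (hGdiag : ∀ i, G i i = 0)
    (δ : ℝ) (hδ : 0 ≤ δ)
    (lam1 : ℝ) (hlam1 : lam1 ∈ spectrum ℝ G)
    (hlam1max : ∀ μ ∈ spectrum ℝ G, μ ≤ lam1)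
    (hA1 : 0 < 1 - δ * lam1)
    (hpd : (Hmat G δ).PosDef)
    (a c : Fin n → ℝ) (hac : ∀ i, c i < a i)
    (τ : ℝ) (hτ : τ ∈ Set.Icc (0 : ℝ) 1) :
    (∃ η ∈ Set.Ico (0 : ℝ) (2 - 2 * δ * lam1),
      profit G δ a c (pFam G δ a c η) = τ * profit G δ a c (pUR a c) ∧
      ∀ p : Fin n → ℝ, τ * profit G δ a c (pUR a c) ≤ profit G δ a c p →
        surplus G δ a p ≤ surplus G δ a (pFam G δ a c η)) ∧
    (τ ∈ Set.Ioc (0 : ℝ) 1 →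
      ∃ η ≤ (0 : ℝ),
        profit G δ a c (pFam G δ a c η) = τ * profit G δ a c (pUR a c) ∧
        ∀ p : Fin n → ℝ, τ * profit G δ a c (pUR a c) ≤ profit G δ a c p →
          surplus G δ a (pFam G δ a c η) ≤ surplus G δ a p) :=
  stmt0_general G hGsym hGnn δ hδ lam1 hlam1 hlam1max hA1 a c hac τ hτ
end

section
/- For every η ∈ [0, 2 − 2δλ₁), the Ramsey objective p ↦ Π(p) + η·V(p) has a unique global maximizer over ℝⁿ, namely 𝕡(η). -/
/-!
In the variable `w = H (a - p)`, which determines `p` because `H` is invertible, the Ramsey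
objective is the concave quadratic `(a - c) ⬝ᵥ w - wᵀ B w` with `B = (1 - η/2) I - δ G`, and `B` is
positive definite because `δ λ₁ < 1 - η/2`. Completing the square, its unique maximizer is
the `w₀` with `2 B w₀ = a - c`; since `B` is a multiple of `I - (2δ/(2-η)) G`, this `w₀` is
`H (a - 𝕡(η))`. Because `G` has a nonnegative diagonal entry, `λ₁ ≥ 0`, which keeps `η < 2`.
-/

open Matrix

namespace Matrix

variable {ι : Type*} [Fintype ι]

theorem IsHermitian.posSemidef_smul_one_sub [DecidableEq ι] {A : Matrix ι ι ℝ}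
    (hA : A.IsHermitian) {lam : ℝ} (hlam : ∀ μ ∈ spectrum ℝ A, μ ≤ lam) :
    (lam • 1 - A).PosSemidef := by
  refine posSemidef_iff_isHermitian_and_spectrum_nonneg.mpr
    ⟨(isHermitian_one.smul (IsSelfAdjoint.all lam)).sub hA, ?_⟩
  rw [← Algebra.algebraMap_eq_smul_one, ← spectrum.singleton_sub_eq]
  rintro _ ⟨_, rfl, μ, hμ, rfl⟩
  simpa using hlam μ hμ

theorem IsHermitian.posDef_smul_one_sub_smul [DecidableEq ι] {A : Matrix ι ι ℝ}
    (hA : A.IsHermitian) {lam : ℝ} (hlam : ∀ μ ∈ spectrum ℝ A, μ ≤ lam) {s t : ℝ} (ht : 0 ≤ t)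
    (hst : t * lam < s) :
    (s • 1 - t • A).PosDef := by
  have h : s • 1 - t • A = (s - t * lam) • (1 : Matrix ι ι ℝ) + t • (lam • 1 - A) := by module
  rw [h]
  exact (PosDef.one.smul (sub_pos.mpr hst)).add_posSemidef
    ((hA.posSemidef_smul_one_sub hlam).smul ht)

theorem IsHermitian.diag_le_of_spectrum_le [DecidableEq ι] {A : Matrix ι ι ℝ}
    (hA : A.IsHermitian) {lam : ℝ} (hlam : ∀ μ ∈ spectrum ℝ A, μ ≤ lam) (i : ι) :
    A i i ≤ lam := by
  simpa using (hA.posSemidef_smul_one_sub hlam).diag_nonneg (i := i)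

theorem dotProduct_sub_quadForm_eq {B : Matrix ι ι ℝ} (hB : B.IsSymm) {d w₀ : ι → ℝ}
    (hw₀ : (2 : ℝ) • (B *ᵥ w₀) = d) (w : ι → ℝ) :
    d ⬝ᵥ w - w ⬝ᵥ (B *ᵥ w) =
      (d ⬝ᵥ w₀ - w₀ ⬝ᵥ (B *ᵥ w₀)) - (w - w₀) ⬝ᵥ (B *ᵥ (w - w₀)) := by
  have hsymm : w₀ ⬝ᵥ (B *ᵥ w) = w ⬝ᵥ (B *ᵥ w₀) := by
    rw [dotProduct_mulVec, ← mulVec_transpose, hB.eq, dotProduct_comm]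
  subst hw₀
  simp only [mulVec_sub, dotProduct_sub, sub_dotProduct, smul_dotProduct, smul_eq_mul]
  rw [dotProduct_comm (B *ᵥ w₀) w, dotProduct_comm (B *ᵥ w₀) w₀, hsymm]
  ring

theorem PosDef.dotProduct_sub_quadForm_lt {B : Matrix ι ι ℝ} (hB : B.PosDef) {d w₀ : ι → ℝ}
    (hw₀ : (2 : ℝ) • (B *ᵥ w₀) = d) {w : ι → ℝ} (hw : w ≠ w₀) :
    d ⬝ᵥ w - w ⬝ᵥ (B *ᵥ w) < d ⬝ᵥ w₀ - w₀ ⬝ᵥ (B *ᵥ w₀) := by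
  rw [dotProduct_sub_quadForm_eq (isHermitian_iff_isSymm.mp hB.isHermitian) hw₀ w,
    sub_lt_self_iff]
  simpa using hB.dotProduct_mulVec_pos (sub_ne_zero.mpr hw)

end Matrix

section Pricing

variable {n : ℕ} {G : Matrix (Fin n) (Fin n) ℝ} {δ : ℝ}

theorem Hmat_isSymm (hG : G.IsSymm) : (Hmat G δ).IsSymm := by
  rw [IsSymm, Hmat, transpose_nonsing_inv, transpose_sub, transpose_one, transpose_smul, hG.eq]

theorem mulVec_Hmat_mulVec (hA : IsUnit (1 - δ • G).det) (x : Fin n → ℝ) :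
    (1 - δ • G) *ᵥ (Hmat G δ *ᵥ x) = x := by
  rw [Hmat, mulVec_mulVec, mul_nonsing_inv _ hA, one_mulVec]

theorem Hmat_mulVec_injective (hA : IsUnit (1 - δ • G).det) :
    Function.Injective (Hmat G δ *ᵥ ·) := fun x y hxy => by
  rw [← mulVec_Hmat_mulVec hA x, ← mulVec_Hmat_mulVec hA y]
  exact congrArg _ hxy

theorem profit_add_mul_surplus_eq (hG : G.IsSymm) (hA : IsUnit (1 - δ • G).det)
    (η : ℝ) (a c p : Fin n → ℝ) :
    profit G δ a c p + η * surplus G δ a p =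
      (a - c) ⬝ᵥ (Hmat G δ *ᵥ (a - p)) -
        (Hmat G δ *ᵥ (a - p)) ⬝ᵥ (((1 - η / 2) • 1 - δ • G) *ᵥ (Hmat G δ *ᵥ (a - p))) := by
  rw [profit, surplus]
  set w := Hmat G δ *ᵥ (a - p)
  have hx : (a - p) ⬝ᵥ w = w ⬝ᵥ ((1 - δ • G) *ᵥ w) := by
    rw [dotProduct_comm, mulVec_Hmat_mulVec hA]
  have hsurplus : (a - p) ⬝ᵥ ((Hmat G δ * Hmat G δ) *ᵥ (a - p)) = w ⬝ᵥ w := by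
    rw [← mulVec_mulVec, dotProduct_mulVec, ← mulVec_transpose, (Hmat_isSymm hG).eq]
  have hpc : p - c = (a - c) - (a - p) := by abel
  rw [hsurplus, hpc, sub_dotProduct, hx]
  simp only [sub_mulVec, smul_mulVec, one_mulVec, dotProduct_sub, dotProduct_smul, smul_eq_mul]
  ring

theorem two_smul_mulVec_Hmat_sub_pFam (hA : IsUnit (1 - δ • G).det) {η : ℝ} (hη : η ≠ 2)
    (hK : IsUnit (1 - (2 * δ / (2 - η)) • G).det) (a c : Fin n → ℝ) :
    (2 : ℝ) • (((1 - η / 2) • 1 - δ • G) *ᵥ (Hmat G δ *ᵥ (a - pFam G δ a c η))) = a - c := by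
  have hη' : 2 - η ≠ 0 := sub_ne_zero.mpr hη.symm
  set K := 1 - (2 * δ / (2 - η)) • G
  set u := K⁻¹ *ᵥ ((1 / 2 : ℝ) • (a - c))
  have hKu : K *ᵥ u = (1 / 2 : ℝ) • (a - c) := by
    rw [mulVec_mulVec, mul_nonsing_inv _ hK, one_mulVec]
  have hBK : ((1 - η / 2) • 1 - δ • G : Matrix (Fin n) (Fin n) ℝ) = ((2 - η) / 2) • K := by
    have : (2 - η) / 2 * (2 * δ / (2 - η)) = δ := by field_simp
    rw [smul_sub, smul_smul, this]
    congr 2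
    ring
  have hAK : (1 - δ • G : Matrix (Fin n) (Fin n) ℝ) = ((2 - η) / 2) • K + (η / 2) • 1 := by
    rw [← hBK]
    module
  have hw : Hmat G δ *ᵥ (a - pFam G δ a c η) = (2 / (2 - η)) • u := by
    have hAw : (1 - δ • G) *ᵥ ((2 / (2 - η)) • u) = a - pFam G δ a c η := by
      rw [hAK, add_mulVec, smul_mulVec, smul_mulVec, one_mulVec, mulVec_smul, hKu, pFam, pUR]
      match_scalars <;> field_simp
      ring
    rw [← hAw, Hmat, mulVec_mulVec, nonsing_inv_mul _ hA, one_mulVec]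
  rw [hw, hBK, smul_mulVec, mulVec_smul, hKu]
  match_scalars <;> field_simp

end Pricing

theorem stmt1_general {n : ℕ} (hn : 1 ≤ n)
    (G : Matrix (Fin n) (Fin n) ℝ) (hGsym : G.IsSymm)
    (hGnn : ∀ i j, 0 ≤ G i j)
    (δ : ℝ) (hδ : 0 ≤ δ)
    (lam1 : ℝ)
    (hlam1max : ∀ μ ∈ spectrum ℝ G, μ ≤ lam1)
    (a c : Fin n → ℝ) :
    ∀ η ∈ Set.Ico (0 : ℝ) (2 - 2 * δ * lam1),
      (∀ p : Fin n → ℝ,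
        profit G δ a c p + η * surplus G δ a p ≤
          profit G δ a c (pFam G δ a c η) + η * surplus G δ a (pFam G δ a c η)) ∧
      (∀ p : Fin n → ℝ,
        profit G δ a c p + η * surplus G δ a p =
          profit G δ a c (pFam G δ a c η) + η * surplus G δ a (pFam G δ a c η) →
        p = pFam G δ a c η) := by
  rintro η ⟨hη0, hη⟩
  have hG : G.IsHermitian := isHermitian_iff_isSymm.mpr hGsym
  have hlam1 : 0 ≤ lam1 := (hGnn ⟨0, hn⟩ ⟨0, hn⟩).trans (hG.diag_le_of_spectrum_le hlam1max _)
  have hη2 : η < 2 := by nlinarith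
  have hB := hG.posDef_smul_one_sub_smul hlam1max hδ (s := 1 - η / 2) (by linarith)
  have hA : IsUnit (1 - δ • G).det := by
    have hpos := hG.posDef_smul_one_sub_smul hlam1max hδ (s := 1) (by linarith)
    simpa using hpos.det_pos.ne'.isUnit
  have hK : IsUnit (1 - (2 * δ / (2 - η)) • G).det := by
    have hpos := hG.posDef_smul_one_sub_smul hlam1max (div_nonneg (by linarith) (by linarith))
      (s := 1) (t := 2 * δ / (2 - η))
      (by rw [div_mul_eq_mul_div, div_lt_one (by linarith)]; linarith)
    simpa using hpos.det_pos.ne'.isUnit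
  have hmax : ∀ p ≠ pFam G δ a c η, profit G δ a c p + η * surplus G δ a p <
      profit G δ a c (pFam G δ a c η) + η * surplus G δ a (pFam G δ a c η) := by
    intro p hp
    rw [profit_add_mul_surplus_eq hGsym hA, profit_add_mul_surplus_eq hGsym hA]
    exact hB.dotProduct_sub_quadForm_lt (two_smul_mulVec_Hmat_sub_pFam hA hη2.ne hK a c)
      fun h => hp (sub_right_injective (Hmat_mulVec_injective hA h))
  refine ⟨fun p => ?_, fun p hp => ?_⟩
  · rcases eq_or_ne p (pFam G δ a c η) with rfl | h
    exacts [le_rfl, (hmax p h).le]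
  · by_contra h
    exact (hmax p h).ne hp

theorem stmt1 {n : ℕ} (hn : 1 ≤ n)
    (G : Matrix (Fin n) (Fin n) ℝ) (hGsym : G.IsSymm)
    (hGnn : ∀ i j, 0 ≤ G i j) (hGdiag : ∀ i, G i i = 0)
    (δ : ℝ) (hδ : 0 ≤ δ)
    (lam1 : ℝ) (hlam1 : lam1 ∈ spectrum ℝ G)
    (hlam1max : ∀ μ ∈ spectrum ℝ G, μ ≤ lam1)
    (hA1 : 0 < 1 - δ * lam1)
    (hpd : (Hmat G δ).PosDef)
    (a c : Fin n → ℝ) (hac : ∀ i, c i < a i) :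
    ∀ η ∈ Set.Ico (0 : ℝ) (2 - 2 * δ * lam1),
      (∀ p : Fin n → ℝ,
        profit G δ a c p + η * surplus G δ a p ≤
          profit G δ a c (pFam G δ a c η) + η * surplus G δ a (pFam G δ a c η)) ∧
      (∀ p : Fin n → ℝ,
        profit G δ a c p + η * surplus G δ a p =
          profit G δ a c (pFam G δ a c η) + η * surplus G δ a (pFam G δ a c η) →
        p = pFam G δ a c η) :=
  stmt1_general hn G hGsym hGnn δ hδ lam1 hlam1max a c
end

section
/- Let K ⊆ ℝⁿ be nonempty, closed and convex. Then: (i) for every p ∈ ℝⁿ, Π(p) = Π(p^ur) − (p − p^ur)ᵀ H (p − p^ur); (ii) there is a unique p* ∈ K maximizing Π over K, and a price p ∈ K maximizes Π over K if and only if it minimizes (q − p^ur)ᵀ H (q − p^ur) over q ∈ K; that is, the firm's optimal regulated price is the projection of p^ur onto K in the norm induced by the positive definite matrix H. -/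
open Matrix

/-
The profit is a concave quadratic centred at `p^ur`: writing `d = (a - c)/2`, one has
`p - c = d + (p - p^ur)` and `a - p = d - (p - p^ur)`, so the symmetry of `H` turns `Π(p)` into the
difference of squares `dᵀHd - (p - p^ur)ᵀH(p - p^ur)`. Maximizing `Π` over `K` is therefore
minimizing the `H`-distance to `p^ur` over `K`. Since `H` is positive definite this function grows
like `‖p‖²`, so it attains its minimum on the closed set `K`, and it is strictly convex, so on the
convex set `K` the minimizer is unique.
-/

open Filter

namespace Matrix

variable {ι : Type*} [Fintype ι] {H : Matrix ι ι ℝ}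

lemma IsHermitian.dotProduct_mulVec_comm (hH : H.IsHermitian) (x y : ι → ℝ) :
    x ⬝ᵥ (H *ᵥ y) = y ⬝ᵥ (H *ᵥ x) := by
  rw [dotProduct_mulVec, ← mulVec_transpose, ← conjTranspose_eq_transpose_of_trivial, hH.eq,
    dotProduct_comm]

lemma IsHermitian.add_dotProduct_mulVec_sub (hH : H.IsHermitian) (d u : ι → ℝ) :
    (d + u) ⬝ᵥ (H *ᵥ (d - u)) = d ⬝ᵥ (H *ᵥ d) - u ⬝ᵥ (H *ᵥ u) := by
  simp only [mulVec_sub, dotProduct_sub, add_dotProduct, hH.dotProduct_mulVec_comm u d]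
  ring

lemma IsHermitian.dotProduct_mulVec_convexCombination (hH : H.IsHermitian) {a b : ℝ}
    (hab : a + b = 1) (x y : ι → ℝ) :
    (a • x + b • y) ⬝ᵥ (H *ᵥ (a • x + b • y)) =
      a * (x ⬝ᵥ (H *ᵥ x)) + b * (y ⬝ᵥ (H *ᵥ y)) - a * b * ((x - y) ⬝ᵥ (H *ᵥ (x - y))) := by
  obtain rfl : b = 1 - a := by linarith
  simp only [mulVec_add, mulVec_sub, mulVec_smul, dotProduct_add, add_dotProduct, dotProduct_sub,
    sub_dotProduct, dotProduct_smul, smul_dotProduct, smul_eq_mul, hH.dotProduct_mulVec_comm y x]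
  ring

namespace PosDef

lemma strictConvexOn_dotProduct_mulVec_sub (hH : H.PosDef) (p₀ : ι → ℝ) :
    StrictConvexOn ℝ Set.univ fun x => (x - p₀) ⬝ᵥ (H *ᵥ (x - p₀)) := by
  refine ⟨convex_univ, fun x _ y _ hxy a b ha hb hab => ?_⟩
  have hshift : a • x + b • y - p₀ = a • (x - p₀) + b • (y - p₀) := by
    rw [smul_sub, smul_sub, sub_add_sub_comm, ← add_smul, hab, one_smul]
  have hpos : 0 < (x - y) ⬝ᵥ (H *ᵥ (x - y)) := by
    simpa using hH.dotProduct_mulVec_pos (sub_ne_zero.2 hxy)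
  simp only [smul_eq_mul]
  rw [hshift, hH.isHermitian.dotProduct_mulVec_convexCombination hab, sub_sub_sub_cancel_right]
  nlinarith [mul_pos (mul_pos ha hb) hpos]

lemma exists_pos_mul_norm_sq_le (hH : H.PosDef) :
    ∃ ε > 0, ∀ x : ι → ℝ, ε * ‖x‖ ^ 2 ≤ x ⬝ᵥ (H *ᵥ x) := by
  have hcont : Continuous fun x : ι → ℝ => x ⬝ᵥ (H *ᵥ x) := by
    simp only [dotProduct, mulVec]
    fun_prop
  obtain ⟨ε, hε, hεle⟩ := (isCompact_sphere (0 : ι → ℝ) 1).exists_forall_le' hcont.continuousOn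
    (a := 0) fun u hu => by
      simpa using hH.dotProduct_mulVec_pos (ne_zero_of_mem_unit_sphere (⟨u, hu⟩ : Metric.sphere _ _))
  refine ⟨ε, hε, fun x => ?_⟩
  rcases eq_or_ne x 0 with rfl | hx
  · simp
  have hunit := hεle (‖x‖⁻¹ • x) (mem_sphere_zero_iff_norm.2 (norm_smul_inv_norm hx))
  rw [mulVec_smul, dotProduct_smul, smul_dotProduct, smul_eq_mul, smul_eq_mul] at hunit
  have hx₀ : 0 < ‖x‖ := norm_pos_iff.2 hx
  calc ε * ‖x‖ ^ 2 ≤ ‖x‖⁻¹ * (‖x‖⁻¹ * (x ⬝ᵥ (H *ᵥ x))) * ‖x‖ ^ 2 := by gcongr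
    _ = x ⬝ᵥ (H *ᵥ x) := by field_simp

lemma tendsto_dotProduct_mulVec_sub_cocompact (hH : H.PosDef) (p₀ : ι → ℝ) :
    Tendsto (fun x => (x - p₀) ⬝ᵥ (H *ᵥ (x - p₀))) (cocompact (ι → ℝ)) atTop := by
  obtain ⟨ε, hε, hle⟩ := hH.exists_pos_mul_norm_sq_le
  refine tendsto_atTop_mono (fun x => hle (x - p₀)) ?_
  have hnorm : Tendsto (fun x : ι → ℝ => ‖x - p₀‖) (cocompact _) atTop :=
    tendsto_norm_cocompact_atTop.comp (Homeomorph.subRight p₀).isClosedEmbedding.tendsto_cocompact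
  exact ((tendsto_pow_atTop two_ne_zero).const_mul_atTop hε).comp hnorm

lemma existsUnique_isMinOn_dotProduct_mulVec_sub (hH : H.PosDef) (p₀ : ι → ℝ)
    {K : Set (ι → ℝ)} (hKne : K.Nonempty) (hKcl : IsClosed K) (hKconv : Convex ℝ K) :
    ∃! x, x ∈ K ∧ IsMinOn (fun x => (x - p₀) ⬝ᵥ (H *ᵥ (x - p₀))) K x := by
  obtain ⟨k, hk⟩ := hKne
  have hcont : Continuous fun x : ι → ℝ => (x - p₀) ⬝ᵥ (H *ᵥ (x - p₀)) := by
    simp only [dotProduct, mulVec]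
    fun_prop
  obtain ⟨x, hxK, hx⟩ := hcont.continuousOn.exists_isMinOn' hKcl hk
    (((hH.tendsto_dotProduct_mulVec_sub_cocompact p₀).eventually_ge_atTop _).filter_mono
      inf_le_left)
  have hstrict := (hH.strictConvexOn_dotProduct_mulVec_sub p₀).subset (Set.subset_univ K) hKconv
  exact ⟨x, ⟨hxK, hx⟩, fun y ⟨hyK, hy⟩ => hstrict.eq_of_isMinOn hy hx hyK hxK⟩

end PosDef

end Matrix

section

variable {n : ℕ} {G : Matrix (Fin n) (Fin n) ℝ} {δ : ℝ}

lemma profit_eq_sub (hH : (Hmat G δ).IsHermitian) (a c p : Fin n → ℝ) :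
    profit G δ a c p =
      profit G δ a c (pUR a c) - (p - pUR a c) ⬝ᵥ (Hmat G δ *ᵥ (p - pUR a c)) := by
  set d : Fin n → ℝ := (1 / 2 : ℝ) • (a - c)
  have hpc : p - c = d + (p - pUR a c) := by simp only [d, pUR]; module
  have hap : a - p = d - (p - pUR a c) := by simp only [d, pUR]; module
  have hURc : pUR a c - c = d := by simp only [d, pUR]; module
  have haUR : a - pUR a c = d := by simp only [d, pUR]; module
  rw [profit, profit, hpc, hap, hURc, haUR]
  exact hH.add_dotProduct_mulVec_sub d _

lemma profit_le_profit_iff (hH : (Hmat G δ).IsHermitian) (a c p q : Fin n → ℝ) :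
    profit G δ a c q ≤ profit G δ a c p ↔
      (p - pUR a c) ⬝ᵥ (Hmat G δ *ᵥ (p - pUR a c)) ≤
        (q - pUR a c) ⬝ᵥ (Hmat G δ *ᵥ (q - pUR a c)) := by
  rw [profit_eq_sub hH a c p, profit_eq_sub hH a c q, sub_le_sub_iff_left]

end

theorem stmt4_general {n : ℕ}
    (G : Matrix (Fin n) (Fin n) ℝ)
    (δ : ℝ)
    (hpd : (Hmat G δ).PosDef)
    (a c : Fin n → ℝ)
    (K : Set (Fin n → ℝ)) (hKne : K.Nonempty) (hKcl : IsClosed K) (hKconv : Convex ℝ K) :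
    (∀ p : Fin n → ℝ,
      profit G δ a c p =
        profit G δ a c (pUR a c) - (p - pUR a c) ⬝ᵥ (Hmat G δ *ᵥ (p - pUR a c))) ∧
    (∃! pstar : Fin n → ℝ, pstar ∈ K ∧ ∀ q ∈ K, profit G δ a c q ≤ profit G δ a c pstar) ∧
    (∀ p ∈ K,
      ((∀ q ∈ K, profit G δ a c q ≤ profit G δ a c p) ↔
        (∀ q ∈ K, (p - pUR a c) ⬝ᵥ (Hmat G δ *ᵥ (p - pUR a c)) ≤
          (q - pUR a c) ⬝ᵥ (Hmat G δ *ᵥ (q - pUR a c))))) := by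
  have hmax_iff (p : Fin n → ℝ) : (∀ q ∈ K, profit G δ a c q ≤ profit G δ a c p) ↔
      ∀ q ∈ K, (p - pUR a c) ⬝ᵥ (Hmat G δ *ᵥ (p - pUR a c)) ≤
        (q - pUR a c) ⬝ᵥ (Hmat G δ *ᵥ (q - pUR a c)) :=
    forall₂_congr fun q _ => profit_le_profit_iff hpd.isHermitian a c p q
  refine ⟨profit_eq_sub hpd.isHermitian a c, ?_, fun p _ => hmax_iff p⟩
  simpa only [hmax_iff, isMinOn_iff] using
    hpd.existsUnique_isMinOn_dotProduct_mulVec_sub (pUR a c) hKne hKcl hKconv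

theorem stmt4 {n : ℕ} (hn : 1 ≤ n)
    (G : Matrix (Fin n) (Fin n) ℝ) (hGsym : G.IsSymm)
    (hGnn : ∀ i j, 0 ≤ G i j) (hGdiag : ∀ i, G i i = 0)
    (δ : ℝ) (hδ : 0 ≤ δ)
    (lam1 : ℝ) (hlam1 : lam1 ∈ spectrum ℝ G)
    (hlam1max : ∀ μ ∈ spectrum ℝ G, μ ≤ lam1)
    (hA1 : 0 < 1 - δ * lam1)
    (hpd : (Hmat G δ).PosDef)
    (a c : Fin n → ℝ) (hac : ∀ i, c i < a i)
    (K : Set (Fin n → ℝ)) (hKne : K.Nonempty) (hKcl : IsClosed K) (hKconv : Convex ℝ K) :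
    (∀ p : Fin n → ℝ,
      profit G δ a c p =
        profit G δ a c (pUR a c) - (p - pUR a c) ⬝ᵥ (Hmat G δ *ᵥ (p - pUR a c))) ∧
    (∃! pstar : Fin n → ℝ, pstar ∈ K ∧ ∀ q ∈ K, profit G δ a c q ≤ profit G δ a c pstar) ∧
    (∀ p ∈ K,
      ((∀ q ∈ K, profit G δ a c q ≤ profit G δ a c p) ↔
        (∀ q ∈ K, (p - pUR a c) ⬝ᵥ (Hmat G δ *ᵥ (p - pUR a c)) ≤
          (q - pUR a c) ⬝ᵥ (Hmat G δ *ᵥ (q - pUR a c))))) :=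
  stmt4_general G δ hpd a c K hKne hKcl hKconv
end

section
/- Let p̲, p̄ ∈ ℝⁿ with p̲ ≤ p̄ entrywise, and let K := {p ∈ ℝⁿ : p̲ ≤ p ≤ p̄} be the regulation by price floors and ceilings. Then for every η ∈ (0, 2 − 2δλ₁), the regulated equilibrium price p* equals 𝕡(η) if and only if p̄ = 𝕡(η). -/
open Matrix

/-!
Write `Π(p) = ‖v‖²_H - ‖p^ur - p‖²_H` with `v = (a - c)/2`, so `p*` is the point of the box
closest to `p^ur` in the `H`-norm. Along the Pareto family, `w := p^ur - 𝕡(η)` equals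
`(η/(2-η)) (I - sG)⁻¹ v` with `s = 2δ/(2-η)`; as `I - sG` and `I - δG` are positive definite
Z-matrices, their inverses preserve positivity, so the gradient `2Hw` of `Π` at `𝕡(η)` is
entrywise positive. Hence if `p* = 𝕡(η)`, no ceiling can be slack, since raising that price would
increase profit. Conversely, if `p̄ = 𝕡(η)`, then for every admissible `q ≤ p̄` the cross term
`(p̄ - q)ᵀ H w` is nonnegative, so `‖p^ur - q‖²_H ≥ ‖w‖²_H + ‖p̄ - q‖²_H` and `p̄` is the unique
maximizer.
-/

open Topology in
lemma exists_pos_le_mul_lt {g d : ℝ} (hg : 0 < g) (hd : 0 < d) (h : ℝ) :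
    ∃ t, 0 < t ∧ t ≤ d ∧ t * h < g := by
  have hsmall : ∀ᶠ t in 𝓝[>] (0 : ℝ), t * h < g :=
    nhdsWithin_le_nhds <| ((continuous_mul_const h).tendsto' 0 0 (zero_mul h)).eventually
      (gt_mem_nhds hg)
  obtain ⟨t, ht, ⟨ht0, htd⟩⟩ := (hsmall.and (Ioc_mem_nhdsGT hd)).exists
  exact ⟨t, ht0, htd, ht⟩

namespace Matrix

variable {ι : Type*} [Fintype ι]

def quadForm {R : Type*} [NonUnitalNonAssocSemiring R] (A : Matrix ι ι R) (x : ι → R) : R :=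
  x ⬝ᵥ (A *ᵥ x)

@[simp]
lemma quadForm_single {R : Type*} [CommSemiring R] [DecidableEq ι] (A : Matrix ι ι R) (i : ι)
    (t : R) : quadForm A (Pi.single i t) = t * (t * A i i) := by
  simp [quadForm, mulVec_single, single_dotProduct]

lemma mulVec_mulVec_inv [DecidableEq ι] {R : Type*} [CommRing R] {B : Matrix ι ι R}
    (hB : IsUnit B) (b : ι → R) : B *ᵥ (B⁻¹ *ᵥ b) = b := by
  rw [mulVec_mulVec, mul_nonsing_inv _ ((isUnit_iff_isUnit_det B).mp hB), one_mulVec]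

section Symm

variable {R : Type*} [CommRing R] {A : Matrix ι ι R}

lemma IsSymm.dotProduct_mulVec_comm_s7 (hA : A.IsSymm) (x y : ι → R) :
    x ⬝ᵥ (A *ᵥ y) = y ⬝ᵥ (A *ᵥ x) := by
  rw [dotProduct_mulVec, ← mulVec_transpose, hA.eq, dotProduct_comm]

lemma IsSymm.quadForm_add (hA : A.IsSymm) (x y : ι → R) :
    quadForm A (x + y) = quadForm A x + 2 * (y ⬝ᵥ (A *ᵥ x)) + quadForm A y := by
  rw [quadForm, mulVec_add, dotProduct_add, add_dotProduct, add_dotProduct,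
    hA.dotProduct_mulVec_comm_s7 x y, quadForm, quadForm]
  ring

lemma IsSymm.sub_dotProduct_mulVec_add (hA : A.IsSymm) (x y : ι → R) :
    (x - y) ⬝ᵥ (A *ᵥ (x + y)) = quadForm A x - quadForm A y := by
  rw [quadForm, quadForm, mulVec_add, dotProduct_add, sub_dotProduct, sub_dotProduct,
    hA.dotProduct_mulVec_comm_s7 y x]
  ring

end Symm

section Real

variable {A : Matrix ι ι ℝ}

lemma PosDef.eq_zero_of_quadForm_nonpos (hA : A.PosDef) {x : ι → ℝ} (hx : quadForm A x ≤ 0) :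
    x = 0 := by
  by_contra h
  have := hA.dotProduct_mulVec_pos h
  rw [star_trivial] at this
  exact hx.not_gt this

lemma IsSymm.quadForm_add_quadForm_le (hA : A.IsSymm) {w d : ι → ℝ} (hw : 0 ≤ A *ᵥ w)
    (hd : 0 ≤ d) : quadForm A w + quadForm A d ≤ quadForm A (w + d) := by
  rw [hA.quadForm_add]
  linarith [dotProduct_nonneg_of_nonneg hd hw]

lemma IsSymm.quadForm_sub_add_quadForm_sub_le (hA : A.IsSymm) {m u q : ι → ℝ}
    (hu : 0 ≤ A *ᵥ (m - u)) (hq : q ≤ u) :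
    quadForm A (m - u) + quadForm A (u - q) ≤ quadForm A (m - q) := by
  simpa using hA.quadForm_add_quadForm_le hu (sub_nonneg.mpr hq)

lemma IsSymm.exists_quadForm_sub_single_lt [DecidableEq ι] (hA : A.IsSymm) {w : ι → ℝ}
    {i : ι} (hi : 0 < (A *ᵥ w) i) {d : ℝ} (hd : 0 < d) :
    ∃ t, 0 < t ∧ t ≤ d ∧ quadForm A (w - Pi.single i t) < quadForm A w := by
  obtain ⟨t, ht0, htd, ht⟩ :=
    exists_pos_le_mul_lt (g := 2 * (A *ᵥ w) i) (by linarith) hd (A i i)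
  refine ⟨t, ht0, htd, ?_⟩
  have hexp : quadForm A (w - Pi.single i t) =
      quadForm A w - t * (2 * (A *ᵥ w) i - t * A i i) := by
    rw [sub_eq_add_neg, ← Pi.single_neg, hA.quadForm_add, single_dotProduct, quadForm_single]
    ring
  rw [hexp]
  nlinarith

lemma IsSymm.exists_le_quadForm_sub_lt [DecidableEq ι] (hA : A.IsSymm) {m p u : ι → ℝ}
    (hpu : p ≤ u) {i : ι} (hi : p i < u i) (hgrad : 0 < (A *ᵥ (m - p)) i) :
    ∃ q, p ≤ q ∧ q ≤ u ∧ quadForm A (m - q) < quadForm A (m - p) := by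
  obtain ⟨t, ht0, htd, hlt⟩ := hA.exists_quadForm_sub_single_lt hgrad (sub_pos.mpr hi)
  refine ⟨p + Pi.single i t, le_add_of_nonneg_right (Pi.single_nonneg.mpr ht0.le), ?_, ?_⟩
  · intro j
    rcases eq_or_ne j i with rfl | hj
    · simpa [le_sub_iff_add_le'] using htd
    · simpa [hj] using hpu j
  · rwa [sub_add_eq_sub_sub]

-- Split `x = x⁺ - x⁻`: the sign pattern of `A` gives `x⁻ ⬝ᵥ A x⁺ ≤ 0`, hence `x⁻ ⬝ᵥ A x⁻ ≤ 0`.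
lemma PosDef.nonneg_of_mulVec_nonneg (hA : A.PosDef) (hZ : ∀ i j, i ≠ j → A i j ≤ 0)
    {x : ι → ℝ} (hx : 0 ≤ A *ᵥ x) : 0 ≤ x := by
  have hcross : x⁻ ⬝ᵥ (A *ᵥ x⁺) ≤ 0 := by
    rw [dot_mulVec_eq_sum_sum]
    refine Finset.sum_nonpos fun j _ => Finset.sum_nonpos fun i _ => ?_
    rcases eq_or_ne i j with rfl | hij
    · rcases le_total (x i) 0 with h | h <;> simp [h]
    · exact mul_nonpos_of_nonpos_of_nonneg
        (mul_nonpos_of_nonneg_of_nonpos (negPart_nonneg _) (hZ i j hij)) (posPart_nonneg _)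
  have hneg : x⁻ = 0 := by
    refine hA.eq_zero_of_quadForm_nonpos ?_
    have hsplit : x⁻ ⬝ᵥ (A *ᵥ x) = x⁻ ⬝ᵥ (A *ᵥ x⁺) - quadForm A x⁻ := by
      rw [quadForm, ← dotProduct_sub, ← mulVec_sub, posPart_sub_negPart]
    linarith [dotProduct_nonneg_of_nonneg (negPart_nonneg x) hx]
  rw [← posPart_sub_negPart x, hneg, sub_zero]
  exact posPart_nonneg x

lemma PosDef.inv_mulVec_nonneg [DecidableEq ι] (hA : A.PosDef)
    (hZ : ∀ i j, i ≠ j → A i j ≤ 0) {b : ι → ℝ} (hb : 0 ≤ b) : 0 ≤ A⁻¹ *ᵥ b :=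
  hA.nonneg_of_mulVec_nonneg hZ <| by rwa [mulVec_mulVec_inv hA.isUnit]

end Real

section OneSubSmul

variable [DecidableEq ι] {G : Matrix ι ι ℝ}

lemma IsHermitian.posSemidef_smul_one_sub_s7 (hG : G.IsHermitian) {lam : ℝ}
    (hlam : ∀ μ ∈ spectrum ℝ G, μ ≤ lam) : (lam • 1 - G).PosSemidef := by
  refine posSemidef_iff_isHermitian_and_spectrum_nonneg.mpr
    ⟨(isHermitian_one.smul (.all lam)).sub hG, ?_⟩
  rw [← Algebra.algebraMap_eq_smul_one, ← spectrum.singleton_sub_eq]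
  rintro _ ⟨_, rfl, μ, hμ, rfl⟩
  exact sub_nonneg.mpr (hlam μ hμ)

lemma IsHermitian.diag_le_of_spectrum_le_s7 (hG : G.IsHermitian) {lam : ℝ}
    (hlam : ∀ μ ∈ spectrum ℝ G, μ ≤ lam) (i : ι) : G i i ≤ lam := by
  simpa using (hG.posSemidef_smul_one_sub_s7 hlam).diag_nonneg (i := i)

lemma IsHermitian.posDef_one_sub_smul (hG : G.IsHermitian) {lam : ℝ}
    (hlam : ∀ μ ∈ spectrum ℝ G, μ ≤ lam) {s : ℝ} (hs : 0 ≤ s) (hsl : s * lam < 1) :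
    (1 - s • G).PosDef := by
  have hsplit : 1 - s • G = (1 - s * lam) • (1 : Matrix ι ι ℝ) + s • (lam • 1 - G) := by
    module
  rw [hsplit]
  exact (PosDef.one.smul (sub_pos.mpr hsl)).add_posSemidef
    ((hG.posSemidef_smul_one_sub_s7 hlam).smul hs)

lemma le_inv_one_sub_smul_mulVec (hGnn : ∀ i j, 0 ≤ G i j) {s : ℝ} (hs : 0 ≤ s)
    (hpd : (1 - s • G).PosDef) {b : ι → ℝ} (hb : 0 ≤ b) : b ≤ (1 - s • G)⁻¹ *ᵥ b := by
  set x := (1 - s • G)⁻¹ *ᵥ b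
  have hx : 0 ≤ x :=
    hpd.inv_mulVec_nonneg (fun i j hij => by simp [hij, mul_nonneg hs (hGnn i j)]) hb
  have hfix : x = b + s • (G *ᵥ x) := by
    have := mulVec_mulVec_inv hpd.isUnit b
    rw [sub_mulVec, one_mulVec, smul_mulVec] at this
    rw [← this, sub_add_cancel]
  have hGx : 0 ≤ G *ᵥ x := fun i => Finset.sum_nonneg fun j _ => mul_nonneg (hGnn i j) (hx j)
  rw [hfix]
  exact le_add_of_nonneg_right (smul_nonneg hs hGx)

lemma inv_one_sub_smul_mulVec_pos (hGnn : ∀ i j, 0 ≤ G i j) {s : ℝ} (hs : 0 ≤ s)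
    (hpd : (1 - s • G).PosDef) {b : ι → ℝ} (hb : ∀ i, 0 < b i) (i : ι) :
    0 < ((1 - s • G)⁻¹ *ᵥ b) i :=
  (hb i).trans_le (le_inv_one_sub_smul_mulVec hGnn hs hpd (fun j => (hb j).le) i)

end OneSubSmul

end Matrix

section Monopoly

variable {n : ℕ} {G : Matrix (Fin n) (Fin n) ℝ} {δ : ℝ}

lemma profit_eq_sub_quadForm (hH : (Hmat G δ).IsSymm) (a c p : Fin n → ℝ) :
    profit G δ a c p =
      quadForm (Hmat G δ) ((1 / 2 : ℝ) • (a - c)) - quadForm (Hmat G δ) (pUR a c - p) := by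
  have hpc : p - c = (1 / 2 : ℝ) • (a - c) - (pUR a c - p) := by
    ext i; simp only [pUR, Pi.sub_apply, Pi.smul_apply, Pi.add_apply, smul_eq_mul]; ring
  have hap : a - p = (1 / 2 : ℝ) • (a - c) + (pUR a c - p) := by
    ext i; simp only [pUR, Pi.sub_apply, Pi.smul_apply, Pi.add_apply, smul_eq_mul]; ring
  rw [profit, hpc, hap, hH.sub_dotProduct_mulVec_add]

lemma Hmat_mulVec_pUR_sub_pFam_pos (hG : G.IsHermitian) (hGnn : ∀ i j, 0 ≤ G i j)
    (hδ : 0 ≤ δ) {lam : ℝ} (hlam : ∀ μ ∈ spectrum ℝ G, μ ≤ lam) (hlam0 : 0 ≤ lam)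
    {η : ℝ} (hη0 : 0 < η) (hη : η < 2 - 2 * δ * lam) {a c : Fin n → ℝ} (hac : ∀ i, c i < a i)
    (i : Fin n) : 0 < (Hmat G δ *ᵥ (pUR a c - pFam G δ a c η)) i := by
  have h2η : 0 < 2 - η := by nlinarith [mul_nonneg hδ hlam0]
  have hs : 0 ≤ 2 * δ / (2 - η) := by positivity
  have hsl : 2 * δ / (2 - η) * lam < 1 := by
    rw [div_mul_eq_mul_div, div_lt_one h2η]; linarith
  have hv : ∀ j, 0 < ((1 / 2 : ℝ) • (a - c)) j := fun j => by
    simpa using sub_pos.mpr (hac j)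
  have hgap : ∀ j, 0 < (pUR a c - pFam G δ a c η) j := fun j => by
    rw [pFam, sub_sub_cancel, Pi.smul_apply, smul_eq_mul]
    exact mul_pos (div_pos hη0 h2η) <|
      inv_one_sub_smul_mulVec_pos hGnn hs (hG.posDef_one_sub_smul hlam hs hsl) hv j
  exact inv_one_sub_smul_mulVec_pos hGnn hδ
    (hG.posDef_one_sub_smul hlam hδ (by nlinarith [mul_nonneg hδ hlam0])) hgap i

end Monopoly

theorem stmt7_general {n : ℕ} (hn : 1 ≤ n)
    (G : Matrix (Fin n) (Fin n) ℝ) (hGsym : G.IsSymm)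
    (hGnn : ∀ i j, 0 ≤ G i j) (hGdiag : ∀ i, G i i = 0)
    (δ : ℝ) (hδ : 0 ≤ δ)
    (lam1 : ℝ)
    (hlam1max : ∀ μ ∈ spectrum ℝ G, μ ≤ lam1)
    (a c : Fin n → ℝ) (hac : ∀ i, c i < a i)
    (plow phigh : Fin n → ℝ)
    (pstar : Fin n → ℝ)
    (hps : pstar ∈ {p : Fin n → ℝ | ∀ i, plow i ≤ p i ∧ p i ≤ phigh i} ∧
      ∀ q ∈ {p : Fin n → ℝ | ∀ i, plow i ≤ p i ∧ p i ≤ phigh i},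
        profit G δ a c q ≤ profit G δ a c pstar) :
    ∀ η ∈ Set.Ioo (0 : ℝ) (2 - 2 * δ * lam1),
      (pstar = pFam G δ a c η ↔ phigh = pFam G δ a c η) := by
  rintro η ⟨hη0, hη⟩
  obtain ⟨hpK, hmax⟩ := hps
  have hG : G.IsHermitian := isHermitian_iff_isSymm.mpr hGsym
  have hlam0 : 0 ≤ lam1 := hGdiag ⟨0, hn⟩ ▸ hG.diag_le_of_spectrum_le_s7 hlam1max ⟨0, hn⟩
  have hH : (Hmat G δ).PosDef :=
    (hG.posDef_one_sub_smul hlam1max hδ (by nlinarith [mul_nonneg hδ hlam0])).inv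
  have hHs : (Hmat G δ).IsSymm := isHermitian_iff_isSymm.mp hH.isHermitian
  have hgrad := Hmat_mulVec_pUR_sub_pFam_pos hG hGnn hδ hlam1max hlam0 hη0 hη hac
  have hopt : ∀ q, plow ≤ q → q ≤ phigh →
      quadForm (Hmat G δ) (pUR a c - pstar) ≤ quadForm (Hmat G δ) (pUR a c - q) := by
    intro q hlq hqu
    simpa only [profit_eq_sub_quadForm hHs, sub_le_sub_iff_left] using
      hmax q fun i => ⟨hlq i, hqu i⟩
  have hlow : plow ≤ pstar := fun i => (hpK i).1
  have hhigh : pstar ≤ phigh := fun i => (hpK i).2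
  constructor
  · intro hp
    rw [← hp] at hgrad ⊢
    by_contra hne
    obtain ⟨i, hi⟩ := (Pi.lt_def.mp (hhigh.lt_of_ne (Ne.symm hne))).2
    obtain ⟨q, hpq, hqu, hlt⟩ := hHs.exists_le_quadForm_sub_lt hhigh hi (hgrad i)
    exact (hopt q (hlow.trans hpq) hqu).not_gt hlt
  · intro hp
    rw [← hp] at hgrad ⊢
    have hle := hopt phigh (hlow.trans hhigh) le_rfl
    have hge := hHs.quadForm_sub_add_quadForm_sub_le (fun i => (hgrad i).le) hhigh
    have hzero := hH.eq_zero_of_quadForm_nonpos (x := phigh - pstar) (by linarith)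
    exact (sub_eq_zero.mp hzero).symm

theorem stmt7 {n : ℕ} (hn : 1 ≤ n)
    (G : Matrix (Fin n) (Fin n) ℝ) (hGsym : G.IsSymm)
    (hGnn : ∀ i j, 0 ≤ G i j) (hGdiag : ∀ i, G i i = 0)
    (δ : ℝ) (hδ : 0 ≤ δ)
    (lam1 : ℝ) (hlam1 : lam1 ∈ spectrum ℝ G)
    (hlam1max : ∀ μ ∈ spectrum ℝ G, μ ≤ lam1)
    (hA1 : 0 < 1 - δ * lam1)
    (hpd : (Hmat G δ).PosDef)
    (a c : Fin n → ℝ) (hac : ∀ i, c i < a i)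
    (plow phigh : Fin n → ℝ) (hbounds : ∀ i, plow i ≤ phigh i)
    (pstar : Fin n → ℝ)
    (hps : pstar ∈ {p : Fin n → ℝ | ∀ i, plow i ≤ p i ∧ p i ≤ phigh i} ∧
      ∀ q ∈ {p : Fin n → ℝ | ∀ i, plow i ≤ p i ∧ p i ≤ phigh i},
        profit G δ a c q ≤ profit G δ a c pstar) :
    ∀ η ∈ Set.Ioo (0 : ℝ) (2 - 2 * δ * lam1),
      (pstar = pFam G δ a c η ↔ phigh = pFam G δ a c η) :=
  stmt7_general hn G hGsym hGnn hGdiag δ hδ lam1 hlam1max a c hac plow phigh pstar hps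
end

section
/- Fix a price vector p ∈ ℝⁿ. As δ tends to 1/λ₁ from the left (with δ ranging over [0, 1/λ₁)), the profit ratio converges: R_Π(p, δ) → 1 − 𝒜(p)², and the consumer-surplus ratio converges: R_V(p, δ) → (1 − 𝒜(p))². -/
open Matrix

/-- The all-ones vector 𝟙. -/
def onesVec (n : ℕ) : Fin n → ℝ := fun _ => 1

/-- The sufficient statistic 𝒜(p) = ⟨w₁, p − p^ur⟩ / ⟨w₁, (a−c)/2⟩. -/
noncomputable def AAstat {n : ℕ} (w1 a c p : Fin n → ℝ) : ℝ :=
  (w1 ⬝ᵥ (p - pUR a c)) / (w1 ⬝ᵥ ((1 / 2 : ℝ) • (a - c)))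

/-- Profit ratio R_Π(p, δ). -/
noncomputable def Rpi {n : ℕ} (G : Matrix (Fin n) (Fin n) ℝ) (δ : ℝ)
    (a c p : Fin n → ℝ) : ℝ :=
  profit G δ a c p / profit G δ a c (pUR a c)

/-- Consumer-surplus ratio R_V(p, δ). -/
noncomputable def Rv {n : ℕ} (G : Matrix (Fin n) (Fin n) ℝ) (δ : ℝ)
    (a c p : Fin n → ℝ) : ℝ :=
  surplus G δ a p / surplus G δ a (pUR a c)


/-!
In the orthonormal eigenbasis of `G`, `H(δ)` acts on `wᵢ` as multiplication by `(1 - δλᵢ)⁻¹`,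
so `Π` and `V` are spectral sums `∑ᵢ (1 - δλᵢ)⁻ᵏ αᵢ βᵢ` with `k = 1, 2`. As `δ → 1/λ₁` the weight
of the Perron mode blows up while the others stay bounded, so both ratios converge to the ratio
of their `w₁`-terms (`w₁`, `λ₁` are `w 0`, `lam 0` below). With `D = ⟨w₁, (a - c)/2⟩ > 0` these
are `⟨w₁, p - c⟩ = D (1 + 𝒜(p))` and `⟨w₁, a - p⟩ = D (1 - 𝒜(p))`.
-/

open Filter Topology

section OrthonormalEigenbasis

variable {ι : Type*} [Fintype ι] [DecidableEq ι] {w : ι → ι → ℝ}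

theorem sum_dotProduct_smul_eq_self (horth : ∀ i j, w i ⬝ᵥ w j = if i = j then 1 else 0)
    (y : ι → ℝ) : ∑ i, (w i ⬝ᵥ y) • w i = y := by
  have hWWt : Matrix.of w * (Matrix.of w)ᵀ = 1 := by
    ext i j
    simpa [Matrix.mul_apply, dotProduct, Matrix.one_apply] using horth i j
  calc ∑ i, (w i ⬝ᵥ y) • w i = y ᵥ* (Matrix.of w)ᵀ ᵥ* Matrix.of w := by
        rw [vecMul_transpose, vecMul_eq_sum]; rfl
    _ = y := by rw [vecMul_vecMul, mul_eq_one_comm.mp hWWt, vecMul_one]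

variable {M : Matrix ι ι ℝ} {μ : ι → ℝ}

theorem mulVec_eq_sum_of_eigen (horth : ∀ i j, w i ⬝ᵥ w j = if i = j then 1 else 0)
    (heig : ∀ i, M *ᵥ w i = μ i • w i) (y : ι → ℝ) :
    M *ᵥ y = ∑ i, (μ i * (w i ⬝ᵥ y)) • w i := by
  conv_lhs => rw [← sum_dotProduct_smul_eq_self horth y]
  simp only [mulVec_sum, mulVec_smul, heig, smul_smul, mul_comm]

theorem dotProduct_mulVec_eq_sum_of_eigen
    (horth : ∀ i j, w i ⬝ᵥ w j = if i = j then 1 else 0)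
    (heig : ∀ i, M *ᵥ w i = μ i • w i) (x y : ι → ℝ) :
    x ⬝ᵥ (M *ᵥ y) = ∑ i, μ i * ((w i ⬝ᵥ x) * (w i ⬝ᵥ y)) := by
  rw [mulVec_eq_sum_of_eigen horth heig, dotProduct_sum]
  simp only [dotProduct_smul, smul_eq_mul, dotProduct_comm x (w _)]
  exact Finset.sum_congr rfl fun i _ => by ring

theorem isUnit_of_eigen (horth : ∀ i j, w i ⬝ᵥ w j = if i = j then 1 else 0)
    (heig : ∀ i, M *ᵥ w i = μ i • w i) (hμ : ∀ i, μ i ≠ 0) : IsUnit M := by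
  refine mulVec_surjective_iff_isUnit.mp fun y => ⟨∑ i, ((μ i)⁻¹ * (w i ⬝ᵥ y)) • w i, ?_⟩
  conv_rhs => rw [← sum_dotProduct_smul_eq_self horth y]
  simp only [mulVec_sum, mulVec_smul, heig, smul_smul]
  exact Finset.sum_congr rfl fun i _ => by rw [mul_right_comm, inv_mul_cancel₀ (hμ i), one_mul]

theorem inv_mulVec_of_eigen (horth : ∀ i j, w i ⬝ᵥ w j = if i = j then 1 else 0)
    (heig : ∀ i, M *ᵥ w i = μ i • w i) (hμ : ∀ i, μ i ≠ 0) (i : ι) :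
    M⁻¹ *ᵥ w i = (μ i)⁻¹ • w i := by
  have hM := isUnit_of_eigen horth heig hμ
  calc M⁻¹ *ᵥ w i = M⁻¹ *ᵥ (M *ᵥ ((μ i)⁻¹ • w i)) := by
        rw [mulVec_smul, heig, smul_smul, inv_mul_cancel₀ (hμ i), one_smul]
    _ = (μ i)⁻¹ • w i := by
        rw [mulVec_mulVec, nonsing_inv_mul _ ((isUnit_iff_isUnit_det M).mp hM), one_mulVec]

end OrthonormalEigenbasis

theorem tendsto_sum_mul_div_sum_mul_of_dominant {α ι : Type*} [Fintype ι] [DecidableEq ι]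
    {l : Filter α} {g : ι → α → ℝ} {i₀ : ι} (hg₀ : ∀ᶠ t in l, g i₀ t ≠ 0)
    (hg : ∀ i ≠ i₀, Tendsto (fun t => g i t / g i₀ t) l (𝓝 0)) (x y : ι → ℝ) (hy : y i₀ ≠ 0) :
    Tendsto (fun t => (∑ i, g i t * x i) / ∑ i, g i t * y i) l (𝓝 (x i₀ / y i₀)) := by
  have hweight : ∀ i, Tendsto (fun t => g i t / g i₀ t) l (𝓝 (if i = i₀ then 1 else 0)) := by
    intro i
    rcases eq_or_ne i i₀ with rfl | hi
    · rw [if_pos rfl]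
      exact tendsto_const_nhds.congr' (hg₀.mono fun t ht => (div_self ht).symm)
    · simpa [hi] using hg i hi
  have hsum : ∀ z : ι → ℝ, Tendsto (fun t => ∑ i, g i t / g i₀ t * z i) l (𝓝 (z i₀)) := by
    intro z
    have := tendsto_finsetSum Finset.univ fun i _ => (hweight i).mul_const (z i)
    simpa using this
  refine ((hsum x).div (hsum y) hy).congr' (hg₀.mono fun t ht => ?_)
  simp only [div_mul_eq_mul_div, ← Finset.sum_div]
  exact div_div_div_cancel_right₀ ht _ _

theorem one_sub_mul_pos_of_mem_Ico {δ μ l₀ : ℝ} (hl₀ : 0 < l₀) (hμ : μ ≤ l₀)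
    (hδ : δ ∈ Set.Ico 0 (1 / l₀)) : 0 < 1 - δ * μ := by
  have : δ * l₀ < 1 := (lt_div_iff₀ hl₀).mp hδ.2
  nlinarith [hδ.1]

theorem tendsto_inv_one_sub_mul_div {μ l₀ : ℝ} (hl₀ : l₀ ≠ 0) (hμ : μ ≠ l₀) :
    Tendsto (fun δ : ℝ => (1 - δ * μ)⁻¹ / (1 - δ * l₀)⁻¹) (𝓝 (1 / l₀)) (𝓝 0) := by
  have hden_ne : 1 - 1 / l₀ * μ ≠ 0 := by
    rw [sub_ne_zero, one_div_mul_eq_div, ne_comm, ne_eq, div_eq_one_iff_eq hl₀]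
    exact hμ
  have hnum : Tendsto (fun δ : ℝ => 1 - δ * l₀) (𝓝 (1 / l₀)) (𝓝 0) :=
    (continuous_const.sub (continuous_id.mul continuous_const)).tendsto' _ _
      (by simp [hl₀])
  have hden : Tendsto (fun δ : ℝ => 1 - δ * μ) (𝓝 (1 / l₀)) (𝓝 (1 - 1 / l₀ * μ)) :=
    (continuous_const.sub (continuous_id.mul continuous_const)).tendsto _
  simp only [inv_div_inv]
  rw [← zero_div (1 - 1 / l₀ * μ)]
  exact hnum.div hden hden_ne

theorem one_sub_smul_mulVec_of_eigen {ι : Type*} [Fintype ι] [DecidableEq ι]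
    {A : Matrix ι ι ℝ} {v : ι → ℝ} {μ : ℝ} (δ : ℝ) (h : A *ᵥ v = μ • v) :
    (1 - δ • A) *ᵥ v = (1 - δ * μ) • v := by
  rw [sub_mulVec, one_mulVec, smul_mulVec, h, smul_smul, sub_smul, one_smul]

section Network

variable {n : ℕ} {G : Matrix (Fin n) (Fin n) ℝ} {w : Fin n → Fin n → ℝ} {lam : Fin n → ℝ}
  {δ : ℝ}

theorem Hmat_mulVec_of_eigen (horth : ∀ i j, w i ⬝ᵥ w j = if i = j then 1 else 0)
    (heig : ∀ i, G *ᵥ w i = lam i • w i) (hδ : ∀ i, 1 - δ * lam i ≠ 0) (i : Fin n) :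
    Hmat G δ *ᵥ w i = (1 - δ * lam i)⁻¹ • w i :=
  inv_mulVec_of_eigen horth (fun i => one_sub_smul_mulVec_of_eigen δ (heig i)) hδ i

theorem profit_eq_sum (horth : ∀ i j, w i ⬝ᵥ w j = if i = j then 1 else 0)
    (heig : ∀ i, G *ᵥ w i = lam i • w i) (hδ : ∀ i, 1 - δ * lam i ≠ 0) (a c p : Fin n → ℝ) :
    profit G δ a c p = ∑ i, (1 - δ * lam i)⁻¹ * ((w i ⬝ᵥ (p - c)) * (w i ⬝ᵥ (a - p))) :=
  dotProduct_mulVec_eq_sum_of_eigen horth (Hmat_mulVec_of_eigen horth heig hδ) _ _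

theorem surplus_eq_sum (horth : ∀ i j, w i ⬝ᵥ w j = if i = j then 1 else 0)
    (heig : ∀ i, G *ᵥ w i = lam i • w i) (hδ : ∀ i, 1 - δ * lam i ≠ 0) (a p : Fin n → ℝ) :
    surplus G δ a p =
      1 / 2 * ∑ i, (1 - δ * lam i)⁻¹ ^ 2 * ((w i ⬝ᵥ (a - p)) * (w i ⬝ᵥ (a - p))) := by
  have hHH : ∀ i, (Hmat G δ * Hmat G δ) *ᵥ w i = (1 - δ * lam i)⁻¹ ^ 2 • w i := fun i => by
    rw [← mulVec_mulVec, Hmat_mulVec_of_eigen horth heig hδ, mulVec_smul,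
      Hmat_mulVec_of_eigen horth heig hδ, smul_smul, sq]
  rw [surplus, dotProduct_mulVec_eq_sum_of_eigen horth hHH]

end Network

section Pricing

variable {n : ℕ} (w₁ a c p : Fin n → ℝ)

theorem pUR_sub_eq_half_sub : pUR a c - c = (1 / 2 : ℝ) • (a - c) := by
  ext; simp only [pUR, Pi.sub_apply, Pi.smul_apply, Pi.add_apply, smul_eq_mul]; ring

theorem sub_pUR_eq_half_sub : a - pUR a c = (1 / 2 : ℝ) • (a - c) := by
  ext; simp only [pUR, Pi.sub_apply, Pi.smul_apply, Pi.add_apply, smul_eq_mul]; ring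

theorem dotProduct_half_sub_pos [NeZero n] (hw : ∀ k, 0 < w₁ k) (hac : ∀ i, c i < a i) :
    0 < w₁ ⬝ᵥ ((1 / 2 : ℝ) • (a - c)) :=
  Finset.sum_pos (fun k _ => mul_pos (hw k) (by simp [hac k])) Finset.univ_nonempty

theorem dotProduct_price_sub_cost :
    w₁ ⬝ᵥ (p - c) = w₁ ⬝ᵥ ((1 / 2 : ℝ) • (a - c)) + w₁ ⬝ᵥ (p - pUR a c) := by
  rw [← sub_add_sub_cancel p (pUR a c) c, pUR_sub_eq_half_sub, dotProduct_add, add_comm]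

theorem dotProduct_intercept_sub_price :
    w₁ ⬝ᵥ (a - p) = w₁ ⬝ᵥ ((1 / 2 : ℝ) • (a - c)) - w₁ ⬝ᵥ (p - pUR a c) := by
  rw [← sub_sub_sub_cancel_right a p (pUR a c), sub_pUR_eq_half_sub, dotProduct_sub]

variable {w₁ a c} (hD : w₁ ⬝ᵥ ((1 / 2 : ℝ) • (a - c)) ≠ 0)
include hD

theorem dominant_profit_ratio_eq :
    (w₁ ⬝ᵥ (p - c)) * (w₁ ⬝ᵥ (a - p)) /
      ((w₁ ⬝ᵥ ((1 / 2 : ℝ) • (a - c))) * (w₁ ⬝ᵥ ((1 / 2 : ℝ) • (a - c)))) =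
      1 - AAstat w₁ a c p ^ 2 := by
  rw [AAstat, dotProduct_price_sub_cost w₁ a c p, dotProduct_intercept_sub_price w₁ a c p]
  field_simp
  ring

theorem dominant_surplus_ratio_eq :
    (w₁ ⬝ᵥ (a - p)) * (w₁ ⬝ᵥ (a - p)) /
      ((w₁ ⬝ᵥ ((1 / 2 : ℝ) • (a - c))) * (w₁ ⬝ᵥ ((1 / 2 : ℝ) • (a - c)))) =
      (1 - AAstat w₁ a c p) ^ 2 := by
  rw [AAstat, dotProduct_intercept_sub_price w₁ a c p]
  field_simp

end Pricing

theorem stmt8_general {n : ℕ} [NeZero n]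
    (G : Matrix (Fin n) (Fin n) ℝ)
    (w : Fin n → Fin n → ℝ) (lam : Fin n → ℝ)
    (horth : ∀ i j, w i ⬝ᵥ w j = if i = j then (1 : ℝ) else 0)
    (heig : ∀ i, G *ᵥ w i = lam i • w i)
    (hgap : ∀ i, i ≠ 0 → lam i < lam 0)
    (hlam0 : 0 < lam 0)
    (hw0 : ∀ k, 0 < w 0 k)
    (a c : Fin n → ℝ) (hac : ∀ i, c i < a i)
    (p : Fin n → ℝ) :
    Filter.Tendsto (fun δ : ℝ => Rpi G δ a c p)
      (nhdsWithin (1 / lam 0) (Set.Ico 0 (1 / lam 0)))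
      (nhds (1 - (AAstat (w 0) a c p) ^ 2)) ∧
    Filter.Tendsto (fun δ : ℝ => Rv G δ a c p)
      (nhdsWithin (1 / lam 0) (Set.Ico 0 (1 / lam 0)))
      (nhds ((1 - AAstat (w 0) a c p) ^ 2)) := by
  have hle : ∀ i, lam i ≤ lam 0 := fun i => by
    rcases eq_or_ne i 0 with rfl | hi
    exacts [le_rfl, (hgap i hi).le]
  have hδ : ∀ᶠ δ in 𝓝[Set.Ico 0 (1 / lam 0)] (1 / lam 0), ∀ i, 1 - δ * lam i ≠ 0 :=
    eventually_nhdsWithin_of_forall fun δ hδ i =>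
      (one_sub_mul_pos_of_mem_Ico hlam0 (hle i) hδ).ne'
  have hratio : ∀ i ≠ 0, Tendsto (fun δ => (1 - δ * lam i)⁻¹ / (1 - δ * lam 0)⁻¹)
      (𝓝[Set.Ico 0 (1 / lam 0)] (1 / lam 0)) (𝓝 0) := fun i hi =>
    (tendsto_inv_one_sub_mul_div hlam0.ne' (hgap i hi).ne).mono_left nhdsWithin_le_nhds
  have hD := (dotProduct_half_sub_pos (w 0) a c hw0 hac).ne'
  constructor
  · rw [← dominant_profit_ratio_eq p hD]
    refine (tendsto_sum_mul_div_sum_mul_of_dominant (g := fun i δ => (1 - δ * lam i)⁻¹)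
      (hδ.mono fun δ h => inv_ne_zero (h 0)) hratio
      (fun i => (w i ⬝ᵥ (p - c)) * (w i ⬝ᵥ (a - p)))
      (fun i => (w i ⬝ᵥ ((1 / 2 : ℝ) • (a - c))) * (w i ⬝ᵥ ((1 / 2 : ℝ) • (a - c))))
      (mul_ne_zero hD hD)).congr' (hδ.mono fun δ h => ?_)
    dsimp only
    rw [Rpi, profit_eq_sum horth heig h, profit_eq_sum horth heig h, pUR_sub_eq_half_sub,
      sub_pUR_eq_half_sub]
  · rw [← dominant_surplus_ratio_eq p hD]
    refine (tendsto_sum_mul_div_sum_mul_of_dominant (g := fun i δ => (1 - δ * lam i)⁻¹ ^ 2)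
      (hδ.mono fun δ h => pow_ne_zero 2 (inv_ne_zero (h 0)))
      (fun i hi => by simpa only [div_pow, zero_pow two_ne_zero] using (hratio i hi).pow 2)
      (fun i => (w i ⬝ᵥ (a - p)) * (w i ⬝ᵥ (a - p)))
      (fun i => (w i ⬝ᵥ ((1 / 2 : ℝ) • (a - c))) * (w i ⬝ᵥ ((1 / 2 : ℝ) • (a - c))))
      (mul_ne_zero hD hD)).congr' (hδ.mono fun δ h => ?_)
    dsimp only
    rw [Rv, surplus_eq_sum horth heig h, surplus_eq_sum horth heig h, sub_pUR_eq_half_sub,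
      mul_div_mul_left _ _ (one_div_ne_zero two_ne_zero)]

theorem stmt8 {n : ℕ} [NeZero n]
    (G : Matrix (Fin n) (Fin n) ℝ) (hGsym : G.IsSymm)
    (hGnn : ∀ i j, 0 ≤ G i j) (hGdiag : ∀ i, G i i = 0)
    (w : Fin n → Fin n → ℝ) (lam : Fin n → ℝ)
    (horth : ∀ i j, w i ⬝ᵥ w j = if i = j then (1 : ℝ) else 0)
    (heig : ∀ i, G *ᵥ w i = lam i • w i)
    (hgap : ∀ i, i ≠ 0 → lam i < lam 0)
    (hlam0 : 0 < lam 0)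
    (hw0 : ∀ k, 0 < w 0 k)
    (hpd : ∀ δ ∈ Set.Ico (0 : ℝ) (1 / lam 0), (Hmat G δ).PosDef)
    (a c : Fin n → ℝ) (hac : ∀ i, c i < a i)
    (p : Fin n → ℝ) :
    Filter.Tendsto (fun δ : ℝ => Rpi G δ a c p)
      (nhdsWithin (1 / lam 0) (Set.Ico 0 (1 / lam 0)))
      (nhds (1 - (AAstat (w 0) a c p) ^ 2)) ∧
    Filter.Tendsto (fun δ : ℝ => Rv G δ a c p)
      (nhdsWithin (1 / lam 0) (Set.Ico 0 (1 / lam 0)))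
      (nhds ((1 - AAstat (w 0) a c p) ^ 2)) :=
  stmt8_general G w lam horth heig hgap hlam0 hw0 a c hac p
end
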